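/- arXiv:2104.04954 — 6 statements merged into one kernel-verified Lean document; each statement's English description precedes it below -/
import Mathlib

section
/- For all θ with 0 < θ < π/2, one has (π − 2θ)·sin θ·tan θ − 2·sin θ + (π − 2θ)·sec θ ≥ ((π − 2θ) − sin 2θ)/cos²θ > 0; in particular the function L(θ) = (π − 2θ)/cos θ · ∫₀^θ cos ω / κ(ω) dω is strictly increasing on (0, π/2) whenever κ : [0, π/2] → ℝ is positive and nonincreasing. -/
open Real Set intervalIntegral

/-!
Write `a = π - 2θ`, `s = sin θ`, `c = cos θ`. Applied at `π/2 - θ`, the inequality `x < tan x`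
becomes `a s < 2c`. This gives the trigonometric inequality, whose two sides differ by
`(1 - c) (a c + s (2c - a s)) / c²`, and it makes the coefficient `(a s - 2c)/c²` in
`L' = (a s - 2c)/c² · ∫₀^θ cos/κ + a/κ(θ)` negative. Since `κ` is nonincreasing,
`∫₀^θ cos/κ ≤ s/κ(θ)`, so `L' ≥ (a - 2sc)/(c² κ(θ)) = (a - sin 2θ)/(c² κ(θ)) > 0`
because `sin (π - 2θ) < π - 2θ`.
-/

lemma mul_cos_lt_sin {x : ℝ} (h0 : 0 < x) (h1 : x < π / 2) : x * cos x < sin x := by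
  have hx := lt_tan h0 h1
  rwa [tan_eq_sin_div_cos, lt_div_iff₀ (cos_pos_of_mem_Ioo ⟨by linarith, h1⟩)] at hx

lemma pi_sub_two_mul_mul_sin_lt_two_mul_cos {θ : ℝ} (h0 : 0 < θ) (h1 : θ < π / 2) :
    (π - 2 * θ) * sin θ < 2 * cos θ := by
  have h := mul_cos_lt_sin (x := π / 2 - θ) (by linarith) (by linarith)
  rw [cos_pi_div_two_sub, sin_pi_div_two_sub] at h
  linarith

lemma sin_two_mul_lt_pi_sub_two_mul {θ : ℝ} (hθ : θ < π / 2) : sin (2 * θ) < π - 2 * θ := by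
  rw [← sin_pi_sub]
  exact sin_lt (by linarith)

lemma pi_sub_two_mul_sub_sin_two_mul_div_cos_sq_le {θ : ℝ} (h0 : 0 < θ) (h1 : θ < π / 2) :
    ((π - 2 * θ) - sin (2 * θ)) / cos θ ^ 2
      ≤ (π - 2 * θ) * sin θ * tan θ - 2 * sin θ + (π - 2 * θ) * (1 / cos θ) := by
  have hc : 0 < cos θ := cos_pos_of_mem_Ioo ⟨by linarith, h1⟩
  have hs : 0 < sin θ := sin_pos_of_pos_of_lt_pi h0 (by linarith)
  have hkey := pi_sub_two_mul_mul_sin_lt_two_mul_cos h0 h1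
  have hdiff : (π - 2 * θ) * sin θ * tan θ - 2 * sin θ + (π - 2 * θ) * (1 / cos θ)
        - ((π - 2 * θ) - sin (2 * θ)) / cos θ ^ 2
      = (1 - cos θ) * ((π - 2 * θ) * cos θ + sin θ * (2 * cos θ - (π - 2 * θ) * sin θ))
        / cos θ ^ 2 := by
    rw [tan_eq_sin_div_cos, sin_two_mul]
    field_simp
    linear_combination (π - 2 * θ) * sin_sq_add_cos_sq θ
  have hnonneg : 0 ≤ (1 - cos θ)
      * ((π - 2 * θ) * cos θ + sin θ * (2 * cos θ - (π - 2 * θ) * sin θ)) / cos θ ^ 2 := by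
    have : 0 ≤ 1 - cos θ := sub_nonneg.2 (cos_le_one θ)
    have : 0 < π - 2 * θ := by linarith
    have : 0 < 2 * cos θ - (π - 2 * θ) * sin θ := sub_pos.2 hkey
    positivity
  linarith

lemma integral_cos_div_le_sin_div {κ : ℝ → ℝ} {θ : ℝ} (h0 : 0 ≤ θ) (hθ : θ ≤ π / 2)
    (hκpos : ∀ ω ∈ Icc 0 θ, 0 < κ ω) (hκanti : AntitoneOn κ (Icc 0 θ)) :
    ∫ ω in (0:ℝ)..θ, cos ω / κ ω ≤ sin θ / κ θ := by
  have hθmem : θ ∈ Icc 0 θ := ⟨h0, le_rfl⟩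
  have hinv : MonotoneOn (fun ω => (κ ω)⁻¹) (uIcc 0 θ) := by
    rw [uIcc_of_le h0]
    exact fun x hx y hy hxy => inv_anti₀ (hκpos y hy) (hκanti hx hy hxy)
  have hint : IntervalIntegrable (fun ω => cos ω / κ ω) MeasureTheory.volume 0 θ := by
    simpa only [div_eq_mul_inv] using hinv.intervalIntegrable.continuousOn_mul continuousOn_cos
  calc ∫ ω in (0:ℝ)..θ, cos ω / κ ω
      ≤ ∫ ω in (0:ℝ)..θ, cos ω / κ θ := by
        refine integral_mono_on h0 hint ((continuous_cos.div_const _).intervalIntegrable _ _) ?_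
        intro ω hω
        exact div_le_div_of_nonneg_left
          (cos_nonneg_of_mem_Icc ⟨by linarith [hω.1, pi_pos], by linarith [hω.2]⟩)
          (hκpos θ hθmem) (hκanti hω hθmem hω.2)
    _ = sin θ / κ θ := by rw [integral_div, integral_cos, sin_zero, sub_zero]

lemma hasDerivAt_integral_of_continuousOn_Icc {f : ℝ → ℝ} {b θ : ℝ}
    (hf : ContinuousOn f (Icc 0 b)) (hθ : θ ∈ Ioo 0 b) :
    HasDerivAt (fun t => ∫ ω in (0:ℝ)..t, f ω) (f θ) θ := by
  have hint : IntervalIntegrable f MeasureTheory.volume 0 θ :=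
    (hf.mono (by rw [uIcc_of_le hθ.1.le]; exact Icc_subset_Icc le_rfl hθ.2.le)).intervalIntegrable
  exact integral_hasDerivAt_right hint
    ((hf.mono Ioo_subset_Icc_self).stronglyMeasurableAtFilter isOpen_Ioo θ hθ)
    (hf.continuousAt (Icc_mem_nhds hθ.1 hθ.2))

lemma hasDerivAt_pi_sub_two_mul_div_cos {θ : ℝ} (hc : cos θ ≠ 0) :
    HasDerivAt (fun t => (π - 2 * t) / cos t)
      (((π - 2 * θ) * sin θ - 2 * cos θ) / cos θ ^ 2) θ := by
  have h := (((hasDerivAt_id θ).const_mul 2).const_sub π).div (hasDerivAt_cos θ) hc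
  exact h.congr_deriv (by simp only [id]; ring)

lemma pi_sub_two_mul_div_cos_mul_integral_deriv_pos {θ k I : ℝ} (h0 : 0 < θ) (h1 : θ < π / 2)
    (hk : 0 < k) (hI : I ≤ sin θ / k) :
    0 < ((π - 2 * θ) * sin θ - 2 * cos θ) / cos θ ^ 2 * I + (π - 2 * θ) / cos θ * (cos θ / k) := by
  have hc : 0 < cos θ := cos_pos_of_mem_Ioo ⟨by linarith, h1⟩
  have hcoef : ((π - 2 * θ) * sin θ - 2 * cos θ) / cos θ ^ 2 ≤ 0 :=
    div_nonpos_of_nonpos_of_nonneg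
      (by linarith [pi_sub_two_mul_mul_sin_lt_two_mul_cos h0 h1]) (by positivity)
  have hnum : 0 < (π - 2 * θ) - sin (2 * θ) := sub_pos.2 (sin_two_mul_lt_pi_sub_two_mul h1)
  calc 0 < ((π - 2 * θ) - sin (2 * θ)) / (cos θ ^ 2 * k) := by positivity
    _ = ((π - 2 * θ) * sin θ - 2 * cos θ) / cos θ ^ 2 * (sin θ / k)
          + (π - 2 * θ) / cos θ * (cos θ / k) := by
        rw [sin_two_mul]
        field_simp
        linear_combination -(π - 2 * θ) * sin_sq_add_cos_sq θ
    _ ≤ _ := by gcongr ?_ + _; exact mul_le_mul_of_nonpos_left hI hcoef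

theorem stmt_1 (κ : ℝ → ℝ)
    (hκcont : ContinuousOn κ (Set.Icc 0 (π / 2)))
    (hκpos : ∀ ω ∈ Set.Icc 0 (π / 2), 0 < κ ω)
    (hκanti : AntitoneOn κ (Set.Icc 0 (π / 2)))
    (L : ℝ → ℝ)
    (hL : ∀ θ, L θ = (π - 2 * θ) / Real.cos θ * ∫ ω in (0:ℝ)..θ, Real.cos ω / κ ω) :
    (∀ θ ∈ Set.Ioo 0 (π / 2),
      (π - 2 * θ) * Real.sin θ * Real.tan θ - 2 * Real.sin θ + (π - 2 * θ) * (1 / Real.cos θ)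
        ≥ ((π - 2 * θ) - Real.sin (2 * θ)) / Real.cos θ ^ 2
      ∧ ((π - 2 * θ) - Real.sin (2 * θ)) / Real.cos θ ^ 2 > 0)
    ∧ StrictMonoOn L (Set.Ioo 0 (π / 2)) := by
  refine ⟨fun θ ⟨h0, h1⟩ => ⟨pi_sub_two_mul_sub_sin_two_mul_div_cos_sq_le h0 h1, ?_⟩, ?_⟩
  · have hc : 0 < cos θ := cos_pos_of_mem_Ioo ⟨by linarith, h1⟩
    exact div_pos (sub_pos.2 (sin_two_mul_lt_pi_sub_two_mul h1)) (by positivity)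
  have hderiv : ∀ θ ∈ Ioo 0 (π / 2), HasDerivAt L
      (((π - 2 * θ) * sin θ - 2 * cos θ) / cos θ ^ 2 * (∫ ω in (0:ℝ)..θ, cos ω / κ ω)
        + (π - 2 * θ) / cos θ * (cos θ / κ θ)) θ := by
    intro θ hθ
    have hc : cos θ ≠ 0 := (cos_pos_of_mem_Ioo ⟨by linarith [hθ.1, pi_pos], hθ.2⟩).ne'
    rw [funext hL]
    exact (hasDerivAt_pi_sub_two_mul_div_cos hc).mul (hasDerivAt_integral_of_continuousOn_Icc
        (continuousOn_cos.div hκcont fun ω hω => (hκpos ω hω).ne') hθ)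
  refine strictMonoOn_of_deriv_pos (convex_Ioo _ _)
    (fun θ hθ => (hderiv θ hθ).continuousAt.continuousWithinAt) fun θ hθ => ?_
  rw [interior_Ioo] at hθ
  obtain ⟨h0, h1⟩ := hθ
  have hsub : Icc 0 θ ⊆ Icc 0 (π / 2) := Icc_subset_Icc le_rfl h1.le
  rw [(hderiv θ ⟨h0, h1⟩).deriv]
  exact pi_sub_two_mul_div_cos_mul_integral_deriv_pos h0 h1 (hκpos θ ⟨h0.le, h1.le⟩)
    (integral_cos_div_le_sin_div h0.le h1.le (fun ω hω => hκpos ω (hsub hω)) (hκanti.mono hsub))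
end

section
/- Suppose Ψ : [0, π/2] → ℝ is smooth with Ψ'(0) = 0, Ψ''(π/2)·cos(π/2) + Ψ'(π/2)·sin(π/2) = Ψ'(π/2) ≥ 0 arranged via Q(π/2) = Ψ'(π/2)·sin(π/2) + Ψ''(π/2)·cos(π/2) = 0, and Ψ'(θ) + Ψ'''(θ) < 0 for all θ ∈ (0, π/2). Define P(θ) = Ψ'(θ)cos θ − Ψ''(θ)sin θ and Q(θ) = Ψ'(θ)sin θ + Ψ''(θ)cos θ. If P(0) = 0 and Q(π/2) = 0, then P > 0 and Q > 0 on (0, π/2), and hence Ψ'(θ) = P(θ)cos θ + Q(θ)sin θ > 0 on (0, π/2). -/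
open Real Set

theorem stmt_3 (Ψ : ℝ → ℝ) (hΨ : ContDiff ℝ (⊤ : ℕ∞) Ψ)
    (hODE : ∀ θ ∈ Set.Ioo 0 (π / 2), deriv Ψ θ + deriv (deriv (deriv Ψ)) θ < 0)
    (P Q : ℝ → ℝ)
    (hP : ∀ θ, P θ = deriv Ψ θ * Real.cos θ - deriv (deriv Ψ) θ * Real.sin θ)
    (hQ : ∀ θ, Q θ = deriv Ψ θ * Real.sin θ + deriv (deriv Ψ) θ * Real.cos θ)
    (hP0 : P 0 = 0) (hQhalf : Q (π / 2) = 0) :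
    ∀ θ ∈ Set.Ioo 0 (π / 2), P θ > 0 ∧ Q θ > 0 ∧ deriv Ψ θ > 0 := by
  have hΨ0 : ContDiff ℝ ((⊤ : ℕ∞) : WithTop ℕ∞) Ψ := hΨ.of_le (by simp)
  have hΨ1 : ContDiff ℝ ((⊤ : ℕ∞) : WithTop ℕ∞) (deriv Ψ) := (contDiff_infty_iff_deriv.mp hΨ0).2
  have hΨ2 : ContDiff ℝ ((⊤ : ℕ∞) : WithTop ℕ∞) (deriv (deriv Ψ)) := (contDiff_infty_iff_deriv.mp hΨ1).2
  have hd1 : Differentiable ℝ (deriv Ψ) := hΨ1.differentiable (by simp)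
  have hd2 : Differentiable ℝ (deriv (deriv Ψ)) := hΨ2.differentiable (by simp)
  have hPeq : P = fun θ => deriv Ψ θ * Real.cos θ - deriv (deriv Ψ) θ * Real.sin θ :=
    funext hP
  have hQeq : Q = fun θ => deriv Ψ θ * Real.sin θ + deriv (deriv Ψ) θ * Real.cos θ :=
    funext hQ
  have hPd : ∀ θ : ℝ, HasDerivAt P
      (-Real.sin θ * (deriv Ψ θ + deriv (deriv (deriv Ψ)) θ)) θ := by
    intro θ
    rw [hPeq]
    have h1 := (((hd1 θ).hasDerivAt.mul (Real.hasDerivAt_cos θ)).sub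
      ((hd2 θ).hasDerivAt.mul (Real.hasDerivAt_sin θ)))
    exact h1.congr_deriv (by ring)
  have hQd : ∀ θ : ℝ, HasDerivAt Q
      (Real.cos θ * (deriv Ψ θ + deriv (deriv (deriv Ψ)) θ)) θ := by
    intro θ
    rw [hQeq]
    have h1 := (((hd1 θ).hasDerivAt.mul (Real.hasDerivAt_sin θ)).add
      ((hd2 θ).hasDerivAt.mul (Real.hasDerivAt_cos θ)))
    exact h1.congr_deriv (by ring)
  have hπ : (0:ℝ) < π / 2 := by positivity
  have hPmono : StrictMonoOn P (Set.Icc 0 (π / 2)) := by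
    apply strictMonoOn_of_deriv_pos (convex_Icc _ _)
    · exact fun x _ => ((hPd x).differentiableAt.continuousAt).continuousWithinAt
    · intro x hx
      rw [interior_Icc] at hx
      rw [(hPd x).deriv]
      have hs : 0 < Real.sin x := Real.sin_pos_of_pos_of_lt_pi hx.1
        (lt_trans hx.2 (by linarith [Real.pi_pos]))
      have := hODE x hx
      nlinarith
  have hQanti : StrictAntiOn Q (Set.Icc 0 (π / 2)) := by
    apply strictAntiOn_of_deriv_neg (convex_Icc _ _)
    · exact fun x _ => ((hQd x).differentiableAt.continuousAt).continuousWithinAt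
    · intro x hx
      rw [interior_Icc] at hx
      rw [(hQd x).deriv]
      have hc : 0 < Real.cos x := Real.cos_pos_of_mem_Ioo ⟨by linarith [Real.pi_pos, hx.1], hx.2⟩
      have := hODE x hx
      nlinarith
  intro θ hθ
  have hθI : θ ∈ Set.Icc 0 (π / 2) := ⟨le_of_lt hθ.1, le_of_lt hθ.2⟩
  have hPpos : 0 < P θ := by
    have := hPmono (Set.left_mem_Icc.mpr (le_of_lt hπ)) hθI hθ.1
    rwa [hP0] at this
  have hQpos : 0 < Q θ := by
    have := hQanti hθI (Set.right_mem_Icc.mpr (le_of_lt hπ)) hθ.2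
    rwa [hQhalf] at this
  refine ⟨hPpos, hQpos, ?_⟩
  have hs : 0 < Real.sin θ := Real.sin_pos_of_pos_of_lt_pi hθ.1
    (lt_trans hθ.2 (by linarith [Real.pi_pos]))
  have hc : 0 < Real.cos θ := Real.cos_pos_of_mem_Ioo ⟨by linarith [Real.pi_pos, hθ.1], hθ.2⟩
  have hid : deriv Ψ θ = P θ * Real.cos θ + Q θ * Real.sin θ := by
    rw [hP, hQ]
    linear_combination (-(deriv Ψ θ)) * (Real.sin_sq_add_cos_sq θ)
  rw [hid]
  positivity
end

section
/- The isoperimetric profile of the unit disk is given parametrically by L*(θ) = (π − 2θ)·tan θ and A(θ) = θ − tan θ + (π/2 − θ)·tan²θ for θ ∈ (0, π/2); that is, the circular arc of curvature cot θ meeting the unit circle orthogonally at angle parameter θ has length (π − 2θ)tan θ and encloses area θ − tan θ + (π/2 − θ)tan²θ together with the boundary circle. -/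
open Real Set intervalIntegral

/-- The perfect arc of the unit disk with contact angle `θ`: endpoints on the unit
circle, orthogonal meeting, length `(π - 2θ)·tan θ`, and enclosed area
`θ - tan θ + (π/2 - θ)·tan²θ` (computed via the shoelace formula along the closed
curve formed by the arc and the boundary arc of the circle). -/
theorem stmt_6 (θ : ℝ) (hθ : θ ∈ Set.Ioo 0 (π / 2)) (σ₁ σ₂ : ℝ → ℝ)
    (hσ₁ : σ₁ = fun x => 1 / Real.cos θ + Real.tan θ * Real.cos ((π - 2 * θ) * x + π / 2 + θ))
    (hσ₂ : σ₂ = fun x => Real.tan θ * Real.sin ((π - 2 * θ) * x + π / 2 + θ)) :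
    -- (i) endpoints on the unit circle
    (σ₁ 0 ^ 2 + σ₂ 0 ^ 2 = 1 ∧ σ₁ 1 ^ 2 + σ₂ 1 ^ 2 = 1)
    -- (i') orthogonality: tangent of the arc at each endpoint is radial
    ∧ (σ₁ 0 * deriv σ₂ 0 - σ₂ 0 * deriv σ₁ 0 = 0
        ∧ σ₁ 1 * deriv σ₂ 1 - σ₂ 1 * deriv σ₁ 1 = 0)
    -- (ii) arclength
    ∧ (∫ x in (0:ℝ)..1, Real.sqrt ((deriv σ₁ x) ^ 2 + (deriv σ₂ x) ^ 2))
        = (π - 2 * θ) * Real.tan θ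
    -- (iii) enclosed area (shoelace of circular boundary arc plus shoelace of the arc)
    ∧ (1 / 2) * (∫ t in (-θ)..θ, (Real.cos t * Real.cos t + Real.sin t * Real.sin t))
        + (1 / 2) * (∫ x in (0:ℝ)..1, (σ₁ x * deriv σ₂ x - σ₂ x * deriv σ₁ x))
        = θ - Real.tan θ + (π / 2 - θ) * Real.tan θ ^ 2 := by
  obtain ⟨hθ0, hθ1⟩ := hθ
  have hπ := Real.pi_pos
  have hc : 0 < Real.cos θ := Real.cos_pos_of_mem_Ioo ⟨by linarith, hθ1⟩
  have hcne : Real.cos θ ≠ 0 := ne_of_gt hc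
  have ht : 0 < Real.tan θ := Real.tan_pos_of_pos_of_lt_pi_div_two hθ0 hθ1
  have hsc := Real.sin_sq_add_cos_sq θ
  have ha0 : 0 < π - 2 * θ := by linarith
  have htan : Real.tan θ = Real.sin θ / Real.cos θ := Real.tan_eq_sin_div_cos θ
  -- linear inner function
  have hl : ∀ x : ℝ, HasDerivAt (fun x : ℝ => (π - 2 * θ) * x + π / 2 + θ) (π - 2 * θ) x := by
    intro x
    simpa using (((hasDerivAt_id x).const_mul (π - 2 * θ)).add_const (π / 2)).add_const θ
  -- derivatives
  have h1 : ∀ x : ℝ, HasDerivAt σ₁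
      (Real.tan θ * (-Real.sin ((π - 2 * θ) * x + π / 2 + θ) * (π - 2 * θ))) x := by
    intro x
    rw [hσ₁]
    exact (((hl x).cos).const_mul (Real.tan θ)).const_add (1 / Real.cos θ)
  have h2 : ∀ x : ℝ, HasDerivAt σ₂
      (Real.tan θ * (Real.cos ((π - 2 * θ) * x + π / 2 + θ) * (π - 2 * θ))) x := by
    intro x
    rw [hσ₂]
    exact ((hl x).sin).const_mul (Real.tan θ)
  have d1 : ∀ x : ℝ, deriv σ₁ x
      = Real.tan θ * (-Real.sin ((π - 2 * θ) * x + π / 2 + θ) * (π - 2 * θ)) :=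
    fun x => (h1 x).deriv
  have d2 : ∀ x : ℝ, deriv σ₂ x
      = Real.tan θ * (Real.cos ((π - 2 * θ) * x + π / 2 + θ) * (π - 2 * θ)) :=
    fun x => (h2 x).deriv
  -- trig at endpoints
  have e1 : (π - 2 * θ) * 1 + π / 2 + θ = π + (π / 2 - θ) := by ring
  have c0 : Real.cos ((π - 2 * θ) * 0 + π / 2 + θ) = -Real.sin θ := by
    simp [Real.cos_add]
  have s0 : Real.sin ((π - 2 * θ) * 0 + π / 2 + θ) = Real.cos θ := by
    simp [Real.sin_add]
  have c1 : Real.cos ((π - 2 * θ) * 1 + π / 2 + θ) = -Real.sin θ := by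
    rw [e1, Real.cos_add]
    simp [Real.cos_pi_div_two_sub, Real.sin_pi_div_two_sub]
  have s1 : Real.sin ((π - 2 * θ) * 1 + π / 2 + θ) = -Real.cos θ := by
    rw [e1, Real.sin_add]
    simp [Real.cos_pi_div_two_sub, Real.sin_pi_div_two_sub]
  -- endpoint values
  have v10 : σ₁ 0 = Real.cos θ := by
    rw [hσ₁]; simp only [c0]; rw [htan]; field_simp; nlinarith [hsc]
  have v20 : σ₂ 0 = Real.sin θ := by
    rw [hσ₂]; simp only [s0]; rw [htan]; field_simp
  have v11 : σ₁ 1 = Real.cos θ := by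
    rw [hσ₁]; simp only [c1]; rw [htan]; field_simp; nlinarith [hsc]
  have v21 : σ₂ 1 = -Real.sin θ := by
    rw [hσ₂]; simp only [s1]; rw [htan]; field_simp
  refine ⟨⟨?_, ?_⟩, ⟨?_, ?_⟩, ?_, ?_⟩
  · rw [v10, v20]; linear_combination hsc
  · rw [v11, v21]; linear_combination hsc
  · rw [v10, v20, d1 0, d2 0, c0, s0]; ring
  · rw [v11, v21, d1 1, d2 1, c1, s1]; ring
  · -- arclength
    have key : ∀ x ∈ Set.uIcc (0:ℝ) 1,
        Real.sqrt ((deriv σ₁ x) ^ 2 + (deriv σ₂ x) ^ 2) = (π - 2 * θ) * Real.tan θ := by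
      intro x _
      rw [d1 x, d2 x]
      rw [show (Real.tan θ * (-Real.sin ((π - 2 * θ) * x + π / 2 + θ) * (π - 2 * θ))) ^ 2
          + (Real.tan θ * (Real.cos ((π - 2 * θ) * x + π / 2 + θ) * (π - 2 * θ))) ^ 2
          = ((π - 2 * θ) * Real.tan θ) ^ 2 by
        linear_combination ((π - 2 * θ) * Real.tan θ) ^ 2
          * Real.sin_sq_add_cos_sq ((π - 2 * θ) * x + π / 2 + θ)]
      exact Real.sqrt_sq (by positivity)
    rw [intervalIntegral.integral_congr key]
    simp
  · -- area
    have harc : (∫ t in (-θ)..θ, (Real.cos t * Real.cos t + Real.sin t * Real.sin t))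
        = 2 * θ := by
      have hone : ∀ t ∈ Set.uIcc (-θ) θ,
          Real.cos t * Real.cos t + Real.sin t * Real.sin t = 1 := by
        intro t _
        linear_combination Real.sin_sq_add_cos_sq t
      rw [intervalIntegral.integral_congr hone]
      simp
      ring
    have hg : ∀ x : ℝ, σ₁ x * deriv σ₂ x - σ₂ x * deriv σ₁ x
        = (π - 2 * θ) * Real.tan θ ^ 2
          + Real.tan θ / Real.cos θ * (Real.cos ((π - 2 * θ) * x + π / 2 + θ) * (π - 2 * θ)) := by
      intro x
      rw [d1 x, d2 x, hσ₁, hσ₂]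
      simp only
      linear_combination ((π - 2 * θ) * Real.tan θ ^ 2)
        * Real.sin_sq_add_cos_sq ((π - 2 * θ) * x + π / 2 + θ)
    have hshoe : (∫ x in (0:ℝ)..1, (σ₁ x * deriv σ₂ x - σ₂ x * deriv σ₁ x))
        = (π - 2 * θ) * Real.tan θ ^ 2 - 2 * Real.tan θ := by
      simp only [hg]
      have hF : ∀ x ∈ Set.uIcc (0:ℝ) 1, HasDerivAt
          (fun x : ℝ => (π - 2 * θ) * Real.tan θ ^ 2 * x
            + Real.tan θ / Real.cos θ * Real.sin ((π - 2 * θ) * x + π / 2 + θ))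
          ((π - 2 * θ) * Real.tan θ ^ 2
            + Real.tan θ / Real.cos θ
              * (Real.cos ((π - 2 * θ) * x + π / 2 + θ) * (π - 2 * θ))) x := by
        intro x _
        have lin : HasDerivAt (fun x : ℝ => (π - 2 * θ) * Real.tan θ ^ 2 * x)
            ((π - 2 * θ) * Real.tan θ ^ 2) x := by
          simpa using (hasDerivAt_id x).const_mul ((π - 2 * θ) * Real.tan θ ^ 2)
        exact lin.add (((hl x).sin).const_mul (Real.tan θ / Real.cos θ))
      have hint : IntervalIntegrable
          (fun x : ℝ => (π - 2 * θ) * Real.tan θ ^ 2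
            + Real.tan θ / Real.cos θ
              * (Real.cos ((π - 2 * θ) * x + π / 2 + θ) * (π - 2 * θ)))
          MeasureTheory.volume 0 1 := by
        apply Continuous.intervalIntegrable
        fun_prop
      rw [intervalIntegral.integral_eq_sub_of_hasDerivAt hF hint]
      simp only [s0, s1]
      field_simp
      ring
    rw [harc, hshoe]
    ring
end

section
/- For θ ∈ (0, π/2), the function A(θ) = θ − tan θ + (π/2 − θ)·tan²θ is strictly increasing, and A(θ) → 0 as θ → 0⁺ while A(θ) → π/2 as θ → π/2⁻. -/
/-!
The derivative factors as `A'(θ) = 2 tan θ sec² θ · ((π/2 - θ) - sin θ cos θ)`, and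
`sin θ cos θ = sin (π - 2θ) / 2 < π/2 - θ`, so `A` is strictly increasing. `A` is continuous at
`0` with `A 0 = 0`. Near `π/2`, put `u = π/2 - θ`, so that `tan θ = 1 / tan u` and
`A θ = θ - (tan u - u) / tan² u`; the correction lies in `[0, u/2]` because
`tan u - u ≤ tan u - sin u = tan u (1 - cos u) ≤ tan u · u²/2 ≤ tan² u · u/2`.
-/

open Real Set Filter Topology

noncomputable def perfectArcArea (θ : ℝ) : ℝ :=
  θ - tan θ + (π / 2 - θ) * tan θ ^ 2

lemma sin_mul_cos_lt_pi_div_two_sub {x : ℝ} (hx : x < π / 2) : sin x * cos x < π / 2 - x := by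
  have h := sin_lt (x := π - 2 * x) (by linarith)
  rw [sin_pi_sub, sin_two_mul] at h
  linarith

lemma hasDerivAt_perfectArcArea {x : ℝ} (hx : cos x ≠ 0) :
    HasDerivAt perfectArcArea (2 * tan x / cos x ^ 2 * (π / 2 - x - sin x * cos x)) x := by
  have htan := hasDerivAt_tan hx
  have h : HasDerivAt perfectArcArea _ x := ((hasDerivAt_id' x).sub htan).add
    (((hasDerivAt_id' x).const_sub (π / 2)).mul (htan.pow 2))
  convert h using 1
  rw [tan_eq_sin_div_cos]
  norm_num
  field_simp
  linear_combination -cos x * sin_sq_add_cos_sq x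

lemma strictMonoOn_perfectArcArea : StrictMonoOn perfectArcArea (Ioo 0 (π / 2)) := by
  have hcos : ∀ x ∈ Ioo 0 (π / 2), 0 < cos x := fun x hx =>
    cos_pos_of_mem_Ioo ⟨by linarith [hx.1, pi_pos], hx.2⟩
  refine strictMonoOn_of_hasDerivWithinAt_pos (convex_Ioo _ _)
    (fun x hx => (hasDerivAt_perfectArcArea (hcos x hx).ne').continuousAt.continuousWithinAt)
    (fun x hx => (hasDerivAt_perfectArcArea (hcos x ?_).ne').hasDerivWithinAt) ?_
  · simpa only [interior_Ioo] using hx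
  · rw [interior_Ioo]
    intro x hx
    have := tan_pos_of_pos_of_lt_pi_div_two hx.1 hx.2
    have := hcos x hx
    have := sin_mul_cos_lt_pi_div_two_sub hx.2
    exact mul_pos (by positivity) (by linarith)

lemma tendsto_perfectArcArea_zero :
    Tendsto perfectArcArea (𝓝[>] 0) (𝓝 0) := by
  have hcont : ContinuousAt perfectArcArea 0 := by
    have htan : ContinuousAt tan 0 := continuousAt_tan.2 (by simp)
    exact (continuousAt_id.sub htan).add ((continuousAt_const.sub continuousAt_id).mul (htan.pow 2))
  simpa [perfectArcArea] using hcont.continuousWithinAt.tendsto (s := Ioi 0)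

lemma perfectArcArea_eq_sub (θ : ℝ) :
    perfectArcArea θ = θ - (tan (π / 2 - θ) - (π / 2 - θ)) / tan (π / 2 - θ) ^ 2 := by
  have htan : tan θ = (tan (π / 2 - θ))⁻¹ := by
    simpa only [sub_sub_cancel] using tan_pi_div_two_sub (π / 2 - θ)
  rw [perfectArcArea, htan]
  generalize tan (π / 2 - θ) = T
  rcases eq_or_ne T 0 with rfl | hT
  · simp
  · field_simp
    ring

lemma tan_sub_self_div_tan_sq_le {u : ℝ} (hu0 : 0 < u) (hu : u < π / 2) :
    (tan u - u) / tan u ^ 2 ≤ u / 2 := by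
  have hut : u < tan u := lt_tan hu0 hu
  have htan : 0 < tan u := hu0.trans hut
  have hsin : tan u * cos u = sin u := by
    rw [tan_eq_sin_div_cos, div_mul_cancel₀]
    exact (cos_pos_of_mem_Ioo ⟨by linarith, hu⟩).ne'
  rw [div_le_iff₀ (by positivity)]
  calc tan u - u ≤ tan u * (1 - cos u) := by linarith [sin_le hu0.le]
    _ ≤ tan u * (u ^ 2 / 2) := by gcongr; linarith [one_sub_sq_div_two_le_cos (x := u)]
    _ ≤ u / 2 * tan u ^ 2 := by nlinarith [mul_le_mul_of_nonneg_left hut.le (mul_pos hu0 htan).le]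

lemma tendsto_perfectArcArea_pi_div_two :
    Tendsto perfectArcArea (𝓝[<] (π / 2)) (𝓝 (π / 2)) := by
  have hmem : Ioo 0 (π / 2) ∈ 𝓝[<] (π / 2) := Ioo_mem_nhdsLT (by positivity)
  have hlower : Tendsto (fun θ => θ - (π / 2 - θ) / 2) (𝓝[<] (π / 2)) (𝓝 (π / 2)) := by
    have h : Continuous fun θ : ℝ => θ - (π / 2 - θ) / 2 := by fun_prop
    simpa using (h.tendsto (π / 2)).mono_left nhdsWithin_le_nhds
  refine tendsto_of_tendsto_of_tendsto_of_le_of_le' hlower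
    (tendsto_id.mono_left nhdsWithin_le_nhds) ?_ ?_
  all_goals
    filter_upwards [hmem] with θ ⟨hθ0, hθ⟩
    have hu0 : 0 < π / 2 - θ := by linarith
    have hu : π / 2 - θ < π / 2 := by linarith
    rw [perfectArcArea_eq_sub]
  · linarith [tan_sub_self_div_tan_sq_le hu0 hu]
  · have : 0 ≤ (tan (π / 2 - θ) - (π / 2 - θ)) / tan (π / 2 - θ) ^ 2 :=
      div_nonneg (by linarith [lt_tan hu0 hu]) (sq_nonneg _)
    simp only [id]
    linarith

theorem stmt_7 (A : ℝ → ℝ)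
    (hA : ∀ θ, A θ = θ - Real.tan θ + (π / 2 - θ) * Real.tan θ ^ 2) :
    StrictMonoOn A (Set.Ioo 0 (π / 2))
    ∧ Filter.Tendsto A (nhdsWithin 0 (Set.Ioi 0)) (nhds 0)
    ∧ Filter.Tendsto A (nhdsWithin (π / 2) (Set.Iio (π / 2))) (nhds (π / 2)) := by
  obtain rfl : A = perfectArcArea := funext hA
  exact ⟨strictMonoOn_perfectArcArea, tendsto_perfectArcArea_zero,
    tendsto_perfectArcArea_pi_div_two⟩
end

section
/- Let f : ℝ → ℝ be continuous and 2π-periodic with ∫₀^{2π} f = 0, let b ∈ (0, π/2), and define for each u the quantity S(u) = −cot b·∫_u^{u+2b} (∂_s f + f²)(v) dv + (∂_s f)(u) + (∂_s f)(u + 2b), where ∂_s f is another continuous 2π-periodic function satisfying ∫₀^{2π} (∂_s f + f²) = 0. Then ∫₀^{2π} S(u) du = −2·∫₀^{2π} f(u)² du, which is strictly negative unless f ≡ 0. -/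
open Real Set intervalIntegral

theorem stmt_17 (f g : ℝ → ℝ) (hf : Continuous f) (hg : Continuous g)
    (hfper : Function.Periodic f (2 * π)) (hgper : Function.Periodic g (2 * π))
    (hfmean : (∫ u in (0:ℝ)..(2 * π), f u) = 0)
    (hmean2 : (∫ u in (0:ℝ)..(2 * π), (g u + f u ^ 2)) = 0)
    (b : ℝ) (hb : b ∈ Set.Ioo 0 (π / 2))
    (S : ℝ → ℝ)
    (hS : ∀ u, S u = -(Real.cos b / Real.sin b) *
        (∫ v in u..(u + 2 * b), (g v + f v ^ 2)) + g u + g (u + 2 * b)) :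
    (∫ u in (0:ℝ)..(2 * π), S u) = -2 * ∫ u in (0:ℝ)..(2 * π), f u ^ 2
    ∧ ((∃ u, f u ≠ 0) → (∫ u in (0:ℝ)..(2 * π), S u) < 0) := by
  have hπ : (0:ℝ) < π := Real.pi_pos
  set h : ℝ → ℝ := fun v => g v + f v ^ 2 with hh
  have hhc : Continuous h := hg.add ((hf.pow 2))
  have hhper : Function.Periodic h (2 * π) := by
    intro x; simp only [hh, hfper x, hgper x]
  have hint : ∀ a c : ℝ, IntervalIntegrable h MeasureTheory.volume a c :=
    fun a c => hhc.intervalIntegrable a c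
  -- primitive
  set F : ℝ → ℝ := fun u => ∫ v in (0:ℝ)..u, h v with hFdef
  have hFc : Continuous F := intervalIntegral.continuous_primitive hint 0
  have hFper : Function.Periodic F (2 * π) := by
    intro x
    have h1 : F (x + 2 * π) - F x = ∫ v in x..(x + 2 * π), h v :=
      integral_interval_sub_left (hint 0 (x + 2 * π)) (hint 0 x)
    have h2 : (∫ v in x..(x + 2 * π), h v) = ∫ v in (0:ℝ)..(0 + 2 * π), h v :=
      hhper.intervalIntegral_add_eq x 0
    have : F (x + 2 * π) - F x = 0 := by
      rw [h1, h2, zero_add]; exact hmean2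
    linarith
  have hinner : ∀ u : ℝ, (∫ v in u..(u + 2 * b), h v) = F (u + 2 * b) - F u :=
    fun u => (integral_interval_sub_left (hint 0 (u + 2 * b)) (hint 0 u)).symm
  -- integral of g over a period
  have hgint : ∀ a c : ℝ, IntervalIntegrable g MeasureTheory.volume a c :=
    fun a c => hg.intervalIntegrable a c
  have hf2int : ∀ a c : ℝ, IntervalIntegrable (fun u => f u ^ 2) MeasureTheory.volume a c :=
    fun a c => ((hf.pow 2)).intervalIntegrable a c
  have hgval : (∫ u in (0:ℝ)..(2 * π), g u) = -∫ u in (0:ℝ)..(2 * π), f u ^ 2 := by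
    have := intervalIntegral.integral_add (hgint 0 (2 * π)) (hf2int 0 (2 * π))
    rw [hmean2] at this
    linarith [this.symm]
  -- integral of shifted g
  have hgshift : (∫ u in (0:ℝ)..(2 * π), g (u + 2 * b)) = ∫ u in (0:ℝ)..(2 * π), g u := by
    rw [intervalIntegral.integral_comp_add_right g (2 * b), zero_add, add_comm (2 * π) (2 * b)]
    have := hgper.intervalIntegral_add_eq (2 * b) 0
    rwa [zero_add] at this
  -- integral of F-difference vanishes
  have hFdiff : (∫ u in (0:ℝ)..(2 * π), (F (u + 2 * b) - F u)) = 0 := by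
    have hFi1 : IntervalIntegrable (fun u => F (u + 2 * b)) MeasureTheory.volume 0 (2 * π) :=
      (hFc.comp (continuous_id.add continuous_const)).intervalIntegrable 0 (2 * π)
    have hFi2 : IntervalIntegrable F MeasureTheory.volume 0 (2 * π) :=
      hFc.intervalIntegrable 0 (2 * π)
    rw [intervalIntegral.integral_sub hFi1 hFi2]
    have h1 : (∫ u in (0:ℝ)..(2 * π), F (u + 2 * b)) = ∫ u in (2 * b)..(2 * b + 2 * π), F u := by
      rw [intervalIntegral.integral_comp_add_right F (2 * b), zero_add, add_comm (2 * π) (2 * b)]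
    have h2 := hFper.intervalIntegral_add_eq (2 * b) 0
    rw [zero_add] at h2
    rw [h1, h2]
    ring
  -- main identity
  have hmain : (∫ u in (0:ℝ)..(2 * π), S u) = -2 * ∫ u in (0:ℝ)..(2 * π), f u ^ 2 := by
    have hSeq : ∀ u, S u = -(Real.cos b / Real.sin b) * (F (u + 2 * b) - F u)
        + g u + g (u + 2 * b) := by
      intro u; rw [hS u, hinner u]
    have hfun : S = fun u => -(Real.cos b / Real.sin b) * (F (u + 2 * b) - F u)
        + g u + g (u + 2 * b) := funext hSeq
    rw [hfun]
    have hi1 : IntervalIntegrable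
        (fun u => -(Real.cos b / Real.sin b) * (F (u + 2 * b) - F u))
        MeasureTheory.volume 0 (2 * π) :=
      (((continuous_const).mul
        ((hFc.comp (continuous_id.add continuous_const)).sub hFc)).intervalIntegrable 0 (2 * π))
    have hi2 : IntervalIntegrable g MeasureTheory.volume 0 (2 * π) := hgint 0 (2 * π)
    have hi3 : IntervalIntegrable (fun u => g (u + 2 * b)) MeasureTheory.volume 0 (2 * π) :=
      (hg.comp (continuous_id.add continuous_const)).intervalIntegrable 0 (2 * π)
    rw [intervalIntegral.integral_add (hi1.add hi2) hi3,
        intervalIntegral.integral_add hi1 hi2,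
        intervalIntegral.integral_const_mul, hFdiff, hgshift, hgval]
    ring
  refine ⟨hmain, ?_⟩
  rintro ⟨u₀, hu₀⟩
  rw [hmain]
  have hf2per : Function.Periodic (fun u => f u ^ 2) (2 * π) := by
    intro x; simp [hfper x]
  have hpos : (0:ℝ) < ∫ u in (u₀ - π)..(u₀ - π + 2 * π), f u ^ 2 := by
    rw [intervalIntegral.integral_pos_iff_support_of_nonneg_ae
      (Filter.Eventually.of_forall fun x => sq_nonneg (f x))
      (hf2int (u₀ - π) (u₀ - π + 2 * π))]
    constructor
    · linarith
    · have hopen : IsOpen ({x | f x ≠ 0} ∩ Ioo (u₀ - π) (u₀ - π + 2 * π)) :=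
        (isOpen_compl_singleton.preimage hf).inter isOpen_Ioo
      have hne : u₀ ∈ {x | f x ≠ 0} ∩ Ioo (u₀ - π) (u₀ - π + 2 * π) := by
        refine ⟨hu₀, ?_, ?_⟩ <;> linarith
      have hsub : {x | f x ≠ 0} ∩ Ioo (u₀ - π) (u₀ - π + 2 * π) ⊆
          Function.support (fun u => f u ^ 2) ∩ Ioc (u₀ - π) (u₀ - π + 2 * π) := by
        rintro x ⟨hx1, hx2, hx3⟩
        exact ⟨pow_ne_zero 2 hx1, hx2, le_of_lt hx3⟩
      calc (0:ENNReal) < MeasureTheory.volume ({x | f x ≠ 0} ∩ Ioo (u₀ - π) (u₀ - π + 2 * π)) :=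
            hopen.measure_pos _ ⟨u₀, hne⟩
        _ ≤ _ := MeasureTheory.measure_mono hsub
  have heq : (∫ u in (u₀ - π)..(u₀ - π + 2 * π), f u ^ 2) = ∫ u in (0:ℝ)..(2 * π), f u ^ 2 := by
    have := hf2per.intervalIntegral_add_eq (u₀ - π) 0
    rwa [zero_add] at this
  rw [heq] at hpos
  linarith
end

section
/- For a smooth arclength-parametrized plane curve C with curvature k satisfying k'(0) = 0 and k''(0) ≠ 0 at p = C(0), the two-point function f(s₁, s₂) = (C(s₁) − C(s₂))·(n(s₁) + n(s₂)) has Taylor expansion f(s₁, s₂) = −(k''(0)/12)·(s₁² − s₂²)(s₁ − s₂)² + O(|s|⁵) as (s₁, s₂) → (0,0). -/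
open Real Set Asymptotics Filter

-- derivative of a degree-4 polynomial
lemma polyD (c0 c1 c2 c3 c4 s : ℝ) :
    HasDerivAt (fun x : ℝ => c0 + c1*x + c2*x^2 + c3*x^3 + c4*x^4)
      (c1 + 2*c2*s + 3*c3*s^2 + 4*c4*s^3) s := by
  have h : HasDerivAt (fun x : ℝ => c0 + c1*x + c2*x^2 + c3*x^3 + c4*x^4)
      ((((0 + c1 * 1) + c2 * (↑(2:ℕ) * s ^ (2-1))) + c3 * (↑(3:ℕ) * s ^ (3-1))) + c4 * (↑(4:ℕ) * s ^ (4-1))) s := by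
    exact ((((hasDerivAt_const s c0).add ((hasDerivAt_id s).const_mul c1)).add
      ((hasDerivAt_pow 2 s).const_mul c2)).add ((hasDerivAt_pow 3 s).const_mul c3)).add
      ((hasDerivAt_pow 4 s).const_mul c4)
  convert h using 1
  push_cast
  ring

-- one Taylor step via MVT
lemma taylor_step (g : ℝ → ℝ) (hg : Differentiable ℝ g) (h0 : g 0 = 0) (m : ℕ)
    (hd : deriv g =O[nhds (0:ℝ)] fun s => s ^ m) :
    g =O[nhds (0:ℝ)] fun s => s ^ (m+1) := by
  obtain ⟨C, hC⟩ := hd.bound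
  rw [Metric.eventually_nhds_iff] at hC
  obtain ⟨ε, εpos, hε⟩ := hC
  rw [isBigO_iff]
  refine ⟨max C 0, ?_⟩
  rw [Metric.eventually_nhds_iff]
  refine ⟨ε, εpos, fun {y} hy => ?_⟩
  have hy' : |y| < ε := by rwa [Real.dist_eq, sub_zero] at hy
  have key : ‖g y - g 0‖ ≤ (max C 0 * |y|^m) * ‖y - 0‖ := by
    refine Convex.norm_image_sub_le_of_norm_deriv_le (s := Metric.closedBall (0:ℝ) |y|)
      (fun z _ => hg z) (fun z hz => ?_) (convex_closedBall _ _) ?_ ?_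
    · have hz' : |z| ≤ |y| := by
        simpa [Real.dist_eq, sub_zero] using Metric.mem_closedBall.mp hz
      have h1 : ‖deriv g z‖ ≤ C * ‖z ^ m‖ := by
        apply hε
        rw [Real.dist_eq, sub_zero]
        exact lt_of_le_of_lt hz' hy'
      calc ‖deriv g z‖ ≤ C * |z|^m := by simpa [abs_pow] using h1
        _ ≤ max C 0 * |z|^m := by
            exact mul_le_mul_of_nonneg_right (le_max_left _ _) (by positivity)
        _ ≤ max C 0 * |y|^m := by
            exact mul_le_mul_of_nonneg_left (pow_le_pow_left₀ (abs_nonneg _) hz' m) (le_max_right _ _)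
    · simpa [Metric.mem_closedBall, Real.dist_eq] using abs_nonneg y
    · simp [Metric.mem_closedBall, Real.dist_eq]
  rw [h0, sub_zero] at key
  calc ‖g y‖ ≤ max C 0 * |y|^m * ‖y - 0‖ := key
    _ = max C 0 * ‖y ^ (m+1)‖ := by
        rw [sub_zero, Real.norm_eq_abs, Real.norm_eq_abs, abs_pow, pow_succ]; ring

-- eventually the norm is ≤ 1
lemma small1 : ∀ᶠ q : ℝ × ℝ in nhds (0, 0), ‖q‖ ≤ 1 := by
  have h := Metric.ball_mem_nhds ((0:ℝ), (0:ℝ)) one_pos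
  filter_upwards [h] with q hq
  have : dist q ((0:ℝ),(0:ℝ)) < 1 := Metric.mem_ball.mp hq
  rw [Prod.mk_zero_zero, dist_zero_right] at this
  exact this.le

lemma mono5 (i j : ℕ) (h : 5 ≤ i + j) :
    (fun q : ℝ × ℝ => q.1 ^ i * q.2 ^ j) =O[nhds ((0:ℝ), (0:ℝ))] fun q => ‖q‖ ^ 5 := by
  rw [isBigO_iff]
  refine ⟨1, ?_⟩
  filter_upwards [small1] with q hq
  have h1 : |q.1| ≤ ‖q‖ := by simpa using norm_fst_le q
  have h2 : |q.2| ≤ ‖q‖ := by simpa using norm_snd_le q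
  have hn : (0:ℝ) ≤ ‖q‖ := norm_nonneg q
  calc ‖q.1 ^ i * q.2 ^ j‖ = |q.1|^i * |q.2|^j := by
        rw [Real.norm_eq_abs, abs_mul, abs_pow, abs_pow]
    _ ≤ ‖q‖^i * ‖q‖^j := by
        exact mul_le_mul (pow_le_pow_left₀ (abs_nonneg _) h1 i)
          (pow_le_pow_left₀ (abs_nonneg _) h2 j) (by positivity) (by positivity)
    _ = ‖q‖^(i+j) := by rw [← pow_add]
    _ ≤ ‖q‖^5 := pow_le_pow_of_le_one hn hq h
    _ ≤ 1 * ‖‖q‖^5‖ := by rw [one_mul, Real.norm_eq_abs, abs_pow, abs_of_nonneg hn]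

lemma monDiff (i : ℕ) (hi : 1 ≤ i) :
    (fun q : ℝ × ℝ => q.1 ^ i - q.2 ^ i) =O[nhds ((0:ℝ), (0:ℝ))] fun q => ‖q‖ := by
  rw [isBigO_iff]
  refine ⟨2, ?_⟩
  filter_upwards [small1] with q hq
  have h1 : |q.1| ≤ ‖q‖ := by simpa using norm_fst_le q
  have h2 : |q.2| ≤ ‖q‖ := by simpa using norm_snd_le q
  have hn : (0:ℝ) ≤ ‖q‖ := norm_nonneg q
  have e1 : |q.1|^i ≤ ‖q‖ := by
    calc |q.1|^i ≤ ‖q‖^i := pow_le_pow_left₀ (abs_nonneg _) h1 i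
      _ ≤ ‖q‖^1 := pow_le_pow_of_le_one hn hq hi
      _ = ‖q‖ := pow_one _
  have e2 : |q.2|^i ≤ ‖q‖ := by
    calc |q.2|^i ≤ ‖q‖^i := pow_le_pow_left₀ (abs_nonneg _) h2 i
      _ ≤ ‖q‖^1 := pow_le_pow_of_le_one hn hq hi
      _ = ‖q‖ := pow_one _
  calc ‖q.1 ^ i - q.2 ^ i‖ ≤ ‖q.1^i‖ + ‖q.2^i‖ := norm_sub_le _ _
    _ = |q.1|^i + |q.2|^i := by rw [Real.norm_eq_abs, Real.norm_eq_abs, abs_pow, abs_pow]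
    _ ≤ ‖q‖ + ‖q‖ := add_le_add e1 e2
    _ = 2 * ‖‖q‖‖ := by rw [Real.norm_eq_abs, abs_of_nonneg hn]; ring

-- compose a one-variable bigO with fst / snd
lemma compFst (g : ℝ → ℝ) (n : ℕ) (h : g =O[nhds (0:ℝ)] fun s => s ^ n) :
    (fun q : ℝ × ℝ => g q.1) =O[nhds ((0:ℝ), (0:ℝ))] fun q => ‖q‖ ^ n := by
  have hfst : Tendsto (Prod.fst : ℝ × ℝ → ℝ) (nhds ((0:ℝ),(0:ℝ))) (nhds 0) :=
    continuousAt_fst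
  refine (h.comp_tendsto hfst).trans ?_
  refine isBigO_of_le _ fun q => ?_
  have h1 : |q.1| ≤ ‖q‖ := by simpa using norm_fst_le q
  simp only [Function.comp, Real.norm_eq_abs, abs_pow]
  calc |q.1|^n ≤ ‖q‖^n := pow_le_pow_left₀ (abs_nonneg _) h1 n
    _ = |‖q‖|^n := by rw [abs_of_nonneg (norm_nonneg q)]

lemma compSnd (g : ℝ → ℝ) (n : ℕ) (h : g =O[nhds (0:ℝ)] fun s => s ^ n) :
    (fun q : ℝ × ℝ => g q.2) =O[nhds ((0:ℝ), (0:ℝ))] fun q => ‖q‖ ^ n := by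
  have hsnd : Tendsto (Prod.snd : ℝ × ℝ → ℝ) (nhds ((0:ℝ),(0:ℝ))) (nhds 0) :=
    continuousAt_snd
  refine (h.comp_tendsto hsnd).trans ?_
  refine isBigO_of_le _ fun q => ?_
  have h2 : |q.2| ≤ ‖q‖ := by simpa using norm_snd_le q
  simp only [Function.comp, Real.norm_eq_abs, abs_pow]
  calc |q.2|^n ≤ ‖q‖^n := pow_le_pow_left₀ (abs_nonneg _) h2 n
    _ = |‖q‖|^n := by rw [abs_of_nonneg (norm_nonneg q)]

lemma taylor34 (F : ℝ → ℝ) (hF : ContDiff ℝ (⊤ : ℕ∞) F) :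
    ((fun s => deriv F s - (deriv F 0 + deriv (deriv F) 0 * s + deriv (deriv (deriv F)) 0/2 * s^2
        + deriv (deriv (deriv (deriv F))) 0/6 * s^3)) =O[nhds (0:ℝ)] fun s => s ^ 4) ∧
    (fun s => F s - (F 0 + deriv F 0 * s + deriv (deriv F) 0/2 * s^2
        + deriv (deriv (deriv F)) 0/6 * s^3 + deriv (deriv (deriv (deriv F))) 0/24 * s^4))
      =O[nhds (0:ℝ)] fun s => s ^ 5 := by
  have h1 : ContDiff ℝ (⊤ : ℕ∞) (deriv F) := (contDiff_infty_iff_deriv.mp hF).2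
  have h2 : ContDiff ℝ (⊤ : ℕ∞) (deriv (deriv F)) := (contDiff_infty_iff_deriv.mp h1).2
  have h3 : ContDiff ℝ (⊤ : ℕ∞) (deriv (deriv (deriv F))) := (contDiff_infty_iff_deriv.mp h2).2
  have h4 : ContDiff ℝ (⊤ : ℕ∞) (deriv (deriv (deriv (deriv F)))) := (contDiff_infty_iff_deriv.mp h3).2
  have d0 : Differentiable ℝ F := (contDiff_infty_iff_deriv.mp hF).1
  have d1 : Differentiable ℝ (deriv F) := (contDiff_infty_iff_deriv.mp h1).1
  have d2 : Differentiable ℝ (deriv (deriv F)) := (contDiff_infty_iff_deriv.mp h2).1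
  have d3 : Differentiable ℝ (deriv (deriv (deriv F))) := (contDiff_infty_iff_deriv.mp h3).1
  have d4 : Differentiable ℝ (deriv (deriv (deriv (deriv F)))) := (contDiff_infty_iff_deriv.mp h4).1
  have h5c : Continuous (deriv (deriv (deriv (deriv (deriv F))))) :=
    (contDiff_infty_iff_deriv.mp h4).2.continuous
  have t4 : (fun s => deriv (deriv (deriv (deriv F))) s - deriv (deriv (deriv (deriv F))) 0)
      =O[nhds (0:ℝ)] fun s => s ^ 1 := by
    refine taylor_step _ (by fun_prop) (by simp) 0 ?_
    have he : deriv (fun s => deriv (deriv (deriv (deriv F))) s - deriv (deriv (deriv (deriv F))) 0)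
        = deriv (deriv (deriv (deriv (deriv F)))) := by
      funext s; exact (((d4 s).hasDerivAt.sub_const _)).deriv
    rw [he]
    exact ((h5c.tendsto 0).isBigO_one ℝ).congr_right fun s => (pow_zero s).symm
  have t3 : (fun s => deriv (deriv (deriv F)) s - (deriv (deriv (deriv F)) 0
      + deriv (deriv (deriv (deriv F))) 0 * s)) =O[nhds (0:ℝ)] fun s => s ^ 2 := by
    refine taylor_step _ (by fun_prop) (by simp) 1 ?_
    have he : deriv (fun s => deriv (deriv (deriv F)) s - (deriv (deriv (deriv F)) 0
        + deriv (deriv (deriv (deriv F))) 0 * s))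
        = fun s => deriv (deriv (deriv (deriv F))) s - deriv (deriv (deriv (deriv F))) 0 := by
      funext s
      have hp : HasDerivAt (fun x : ℝ => deriv (deriv (deriv F)) 0
          + deriv (deriv (deriv (deriv F))) 0 * x) (deriv (deriv (deriv (deriv F))) 0 * 1) s :=
        ((hasDerivAt_id s).const_mul _).const_add _
      refine (((d3 s).hasDerivAt.sub hp).deriv).trans ?_; ring
    rw [he]; exact t4
  have t2 : (fun s => deriv (deriv F) s - (deriv (deriv F) 0 + deriv (deriv (deriv F)) 0 * s
      + deriv (deriv (deriv (deriv F))) 0/2 * s^2)) =O[nhds (0:ℝ)] fun s => s ^ 3 := by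
    refine taylor_step _ (by fun_prop) (by simp) 2 ?_
    have he : deriv (fun s => deriv (deriv F) s - (deriv (deriv F) 0 + deriv (deriv (deriv F)) 0 * s
        + deriv (deriv (deriv (deriv F))) 0/2 * s^2))
        = fun s => deriv (deriv (deriv F)) s - (deriv (deriv (deriv F)) 0
          + deriv (deriv (deriv (deriv F))) 0 * s) := by
      funext s
      have hp : HasDerivAt (fun x : ℝ => deriv (deriv F) 0 + deriv (deriv (deriv F)) 0 * x
          + deriv (deriv (deriv (deriv F))) 0/2 * x^2)
          ((deriv (deriv (deriv F)) 0 * 1) + deriv (deriv (deriv (deriv F))) 0/2 * (↑(2:ℕ) * s ^ (2-1))) s :=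
        (((hasDerivAt_id s).const_mul _).const_add _).add ((hasDerivAt_pow 2 s).const_mul _)
      refine (((d2 s).hasDerivAt.sub hp).deriv).trans ?_; push_cast; ring
    rw [he]; exact t3
  have t1 : (fun s => deriv F s - (deriv F 0 + deriv (deriv F) 0 * s + deriv (deriv (deriv F)) 0/2 * s^2
      + deriv (deriv (deriv (deriv F))) 0/6 * s^3)) =O[nhds (0:ℝ)] fun s => s ^ 4 := by
    refine taylor_step _ (by fun_prop) (by simp) 3 ?_
    have he : deriv (fun s => deriv F s - (deriv F 0 + deriv (deriv F) 0 * s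
        + deriv (deriv (deriv F)) 0/2 * s^2 + deriv (deriv (deriv (deriv F))) 0/6 * s^3))
        = fun s => deriv (deriv F) s - (deriv (deriv F) 0 + deriv (deriv (deriv F)) 0 * s
          + deriv (deriv (deriv (deriv F))) 0/2 * s^2) := by
      funext s
      have hp : HasDerivAt (fun x : ℝ => deriv F 0 + deriv (deriv F) 0 * x
          + deriv (deriv (deriv F)) 0/2 * x^2 + deriv (deriv (deriv (deriv F))) 0/6 * x^3)
          (((deriv (deriv F) 0 * 1) + deriv (deriv (deriv F)) 0/2 * (↑(2:ℕ) * s ^ (2-1)))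
            + deriv (deriv (deriv (deriv F))) 0/6 * (↑(3:ℕ) * s ^ (3-1))) s :=
        ((((hasDerivAt_id s).const_mul _).const_add _).add
          ((hasDerivAt_pow 2 s).const_mul _)).add ((hasDerivAt_pow 3 s).const_mul _)
      refine (((d1 s).hasDerivAt.sub hp).deriv).trans ?_; push_cast; ring
    rw [he]; exact t2
  refine ⟨t1, ?_⟩
  refine taylor_step _ (by fun_prop) (by simp) 4 ?_
  · have he : deriv (fun s => F s - (F 0 + deriv F 0 * s + deriv (deriv F) 0/2 * s^2
        + deriv (deriv (deriv F)) 0/6 * s^3 + deriv (deriv (deriv (deriv F))) 0/24 * s^4))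
        = fun s => deriv F s - (deriv F 0 + deriv (deriv F) 0 * s
          + deriv (deriv (deriv F)) 0/2 * s^2 + deriv (deriv (deriv (deriv F))) 0/6 * s^3) := by
      funext s
      refine (((d0 s).hasDerivAt.sub (polyD (F 0) (deriv F 0) (deriv (deriv F) 0/2)
        (deriv (deriv (deriv F)) 0/6) (deriv (deriv (deriv (deriv F))) 0/24) s)).deriv).trans ?_
      ring
    rw [he]; exact t1


set_option maxHeartbeats 1000000 in
/-- Near a nondegenerate vertex (`k'(0) = 0`, `k''(0) ≠ 0`) of a smooth unit-speed plane
curve through the origin, the two-point function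
`f(s₁,s₂) = (C(s₁) - C(s₂)) · (n(s₁) + n(s₂))` has the Taylor expansion
`f(s₁,s₂) = -(k''(0)/12)(s₁² - s₂²)(s₁ - s₂)² + O(|s|⁵)`. -/
theorem stmt_18 (c₁ c₂ : ℝ → ℝ)
    (hc₁ : ContDiff ℝ (⊤ : ℕ∞) c₁) (hc₂ : ContDiff ℝ (⊤ : ℕ∞) c₂)
    (h0 : c₁ 0 = 0 ∧ c₂ 0 = 0)
    (hunit : ∀ s, (deriv c₁ s) ^ 2 + (deriv c₂ s) ^ 2 = 1)
    (k : ℝ → ℝ)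
    (hk : ∀ s, k s = deriv c₁ s * deriv (deriv c₂) s - deriv c₂ s * deriv (deriv c₁) s)
    (hvertex : deriv k 0 = 0) (hnondeg : deriv (deriv k) 0 ≠ 0)
    (f : ℝ → ℝ → ℝ)
    (hf : ∀ s₁ s₂, f s₁ s₂ =
      (c₁ s₁ - c₁ s₂) * (-(deriv c₂ s₁) + -(deriv c₂ s₂))
        + (c₂ s₁ - c₂ s₂) * (deriv c₁ s₁ + deriv c₁ s₂)) :
    (fun p : ℝ × ℝ =>
        f p.1 p.2 - (-(deriv (deriv k) 0 / 12) * (p.1 ^ 2 - p.2 ^ 2) * (p.1 - p.2) ^ 2))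
      =O[nhds (0, 0)] fun p : ℝ × ℝ => ‖p‖ ^ 5 := by
  have hC1 : ContDiff ℝ (⊤ : ℕ∞) c₁ := hc₁.of_le (by simp)
  have hC2 : ContDiff ℝ (⊤ : ℕ∞) c₂ := hc₂.of_le (by simp)
  have h1x : ContDiff ℝ (⊤ : ℕ∞) (deriv c₁) := (contDiff_infty_iff_deriv.mp hC1).2
  have h1y : ContDiff ℝ (⊤ : ℕ∞) (deriv c₂) := (contDiff_infty_iff_deriv.mp hC2).2
  have h2x : ContDiff ℝ (⊤ : ℕ∞) (deriv (deriv c₁)) := (contDiff_infty_iff_deriv.mp h1x).2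
  have h2y : ContDiff ℝ (⊤ : ℕ∞) (deriv (deriv c₂)) := (contDiff_infty_iff_deriv.mp h1y).2
  have d1x : Differentiable ℝ (deriv c₁) := (contDiff_infty_iff_deriv.mp h1x).1
  have d1y : Differentiable ℝ (deriv c₂) := (contDiff_infty_iff_deriv.mp h1y).1
  have d2x : Differentiable ℝ (deriv (deriv c₁)) := (contDiff_infty_iff_deriv.mp h2x).1
  have d2y : Differentiable ℝ (deriv (deriv c₂)) := (contDiff_infty_iff_deriv.mp h2y).1
  have hkC : ContDiff ℝ (⊤ : ℕ∞) k := by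
    have hkfun : k = fun s => deriv c₁ s * deriv (deriv c₂) s - deriv c₂ s * deriv (deriv c₁) s :=
      funext hk
    rw [hkfun]; exact (h1x.mul h2y).sub (h1y.mul h2x)
  have hk1C : ContDiff ℝ (⊤ : ℕ∞) (deriv k) := (contDiff_infty_iff_deriv.mp hkC).2
  have dk : Differentiable ℝ k := (contDiff_infty_iff_deriv.mp hkC).1
  have dk1 : Differentiable ℝ (deriv k) := (contDiff_infty_iff_deriv.mp hk1C).1
  -- orthogonality t ⊥ t'
  have hA : ∀ s, deriv c₁ s * deriv (deriv c₁) s + deriv c₂ s * deriv (deriv c₂) s = 0 := by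
    intro s
    have hD : HasDerivAt (fun s => deriv c₁ s ^ 2 + deriv c₂ s ^ 2)
        (↑(2:ℕ) * deriv c₁ s ^ (2-1) * deriv (deriv c₁) s
          + ↑(2:ℕ) * deriv c₂ s ^ (2-1) * deriv (deriv c₂) s) s :=
      ((d1x s).hasDerivAt.pow 2).add ((d1y s).hasDerivAt.pow 2)
    have h1 := hD.deriv
    have h2 : deriv (fun s => deriv c₁ s ^ 2 + deriv c₂ s ^ 2) s = 0 := by
      rw [funext hunit]; exact deriv_const s 1
    rw [h1] at h2
    push_cast at h2
    nlinarith [h2]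
  -- Frenet equations
  have hx2 : ∀ s, deriv (deriv c₁) s = -(k s * deriv c₂ s) := by
    intro s
    linear_combination (deriv c₂ s) * hk s + (deriv c₁ s) * hA s - (deriv (deriv c₁) s) * hunit s
  have hy2 : ∀ s, deriv (deriv c₂) s = k s * deriv c₁ s := by
    intro s
    linear_combination (-(deriv c₁ s)) * hk s + (deriv c₂ s) * hA s - (deriv (deriv c₂) s) * hunit s
  have hx2fun : deriv (deriv c₁) = fun s => -(k s * deriv c₂ s) := funext hx2
  have hy2fun : deriv (deriv c₂) = fun s => k s * deriv c₁ s := funext hy2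
  have hx3 : ∀ s, deriv (deriv (deriv c₁)) s
      = -(deriv k s * deriv c₂ s + k s * deriv (deriv c₂) s) := by
    intro s
    rw [hx2fun]
    exact (((dk s).hasDerivAt.mul ((d1y s).hasDerivAt)).neg).deriv
  have hy3 : ∀ s, deriv (deriv (deriv c₂)) s
      = deriv k s * deriv c₁ s + k s * deriv (deriv c₁) s := by
    intro s
    rw [hy2fun]
    exact ((dk s).hasDerivAt.mul ((d1x s).hasDerivAt)).deriv
  have hx3fun : deriv (deriv (deriv c₁))
      = fun s => -(deriv k s * deriv c₂ s + k s * deriv (deriv c₂) s) := funext hx3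
  have hy3fun : deriv (deriv (deriv c₂))
      = fun s => deriv k s * deriv c₁ s + k s * deriv (deriv c₁) s := funext hy3
  have hx4 : ∀ s, deriv (deriv (deriv (deriv c₁))) s
      = -((deriv (deriv k) s * deriv c₂ s + deriv k s * deriv (deriv c₂) s)
          + (deriv k s * deriv (deriv c₂) s + k s * deriv (deriv (deriv c₂)) s)) := by
    intro s
    rw [hx3fun]
    exact ((((dk1 s).hasDerivAt.mul ((d1y s).hasDerivAt)).add
      (((dk s).hasDerivAt.mul ((d2y s).hasDerivAt)))).neg).deriv
  have hy4 : ∀ s, deriv (deriv (deriv (deriv c₂))) s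
      = (deriv (deriv k) s * deriv c₁ s + deriv k s * deriv (deriv c₁) s)
          + (deriv k s * deriv (deriv c₁) s + k s * deriv (deriv (deriv c₁)) s) := by
    intro s
    rw [hy3fun]
    exact (((dk1 s).hasDerivAt.mul ((d1x s).hasDerivAt)).add
      (((dk s).hasDerivAt.mul ((d2x s).hasDerivAt)))).deriv
  -- values at 0
  have e2x : deriv (deriv c₁) 0 = -(k 0 * deriv c₂ 0) := hx2 0
  have e2y : deriv (deriv c₂) 0 = k 0 * deriv c₁ 0 := hy2 0
  have e3x : deriv (deriv (deriv c₁)) 0 = -(k 0 ^ 2 * deriv c₁ 0) := by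
    rw [hx3 0, hy2 0, hvertex]; ring
  have e3y : deriv (deriv (deriv c₂)) 0 = -(k 0 ^ 2 * deriv c₂ 0) := by
    rw [hy3 0, hx2 0, hvertex]; ring
  have e4x : deriv (deriv (deriv (deriv c₁))) 0 = (k 0 ^ 3 - deriv (deriv k) 0) * deriv c₂ 0 := by
    rw [hx4 0, hy3 0, hx2 0, hvertex]; ring
  have e4y : deriv (deriv (deriv (deriv c₂))) 0 = (deriv (deriv k) 0 - k 0 ^ 3) * deriv c₁ 0 := by
    rw [hy4 0, hx3 0, hy2 0, hvertex]; ring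
  -- Taylor remainders
  obtain ⟨t1x, t0x⟩ := taylor34 c₁ hC1
  obtain ⟨t1y, t0y⟩ := taylor34 c₂ hC2
  have hR0xO : (fun s => (c₁ s - (deriv c₁ 0 * s + -(k 0 * deriv c₂ 0) / 2 * s ^ 2 + -(k 0 ^ 2 * deriv c₁ 0) / 6 * s ^ 3 + ((k 0 ^ 3 - deriv (deriv k) 0) * deriv c₂ 0) / 24 * s ^ 4))) =O[nhds (0:ℝ)] fun s => s ^ 5 :=
    t0x.congr_left fun s => by rw [h0.1, e2x, e3x, e4x]; ring
  have hR0yO : (fun s => (c₂ s - (deriv c₂ 0 * s + k 0 * deriv c₁ 0 / 2 * s ^ 2 + -(k 0 ^ 2 * deriv c₂ 0) / 6 * s ^ 3 + ((deriv (deriv k) 0 - k 0 ^ 3) * deriv c₁ 0) / 24 * s ^ 4))) =O[nhds (0:ℝ)] fun s => s ^ 5 :=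
    t0y.congr_left fun s => by rw [h0.2, e2y, e3y, e4y]; ring
  have hR1xO : (fun s => (deriv c₁ s - (deriv c₁ 0 + -(k 0 * deriv c₂ 0) * s + -(k 0 ^ 2 * deriv c₁ 0) / 2 * s ^ 2 + ((k 0 ^ 3 - deriv (deriv k) 0) * deriv c₂ 0) / 6 * s ^ 3))) =O[nhds (0:ℝ)] fun s => s ^ 4 :=
    t1x.congr_left fun s => by rw [e2x, e3x, e4x]
  have hR1yO : (fun s => (deriv c₂ s - (deriv c₂ 0 + k 0 * deriv c₁ 0 * s + -(k 0 ^ 2 * deriv c₂ 0) / 2 * s ^ 2 + ((deriv (deriv k) 0 - k 0 ^ 3) * deriv c₁ 0) / 6 * s ^ 3))) =O[nhds (0:ℝ)] fun s => s ^ 4 :=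
    t1y.congr_left fun s => by rw [e2y, e3y, e4y]
  -- two-variable big-O pieces
  have hW : (fun q : ℝ × ℝ => -(deriv c₂ q.1 - (deriv c₂ 0 + k 0 * deriv c₁ 0 * q.1 + -(k 0 ^ 2 * deriv c₂ 0) / 2 * q.1 ^ 2 + ((deriv (deriv k) 0 - k 0 ^ 3) * deriv c₁ 0) / 6 * q.1 ^ 3)) - (deriv c₂ q.2 - (deriv c₂ 0 + k 0 * deriv c₁ 0 * q.2 + -(k 0 ^ 2 * deriv c₂ 0) / 2 * q.2 ^ 2 + ((deriv (deriv k) 0 - k 0 ^ 3) * deriv c₁ 0) / 6 * q.2 ^ 3)))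
      =O[nhds ((0:ℝ), (0:ℝ))] fun q => ‖q‖ ^ 4 :=
    ((compFst _ 4 hR1yO).neg_left).sub (compSnd _ 4 hR1yO)
  have hU : (fun q : ℝ × ℝ => (deriv c₁ q.1 - (deriv c₁ 0 + -(k 0 * deriv c₂ 0) * q.1 + -(k 0 ^ 2 * deriv c₁ 0) / 2 * q.1 ^ 2 + ((k 0 ^ 3 - deriv (deriv k) 0) * deriv c₂ 0) / 6 * q.1 ^ 3)) + (deriv c₁ q.2 - (deriv c₁ 0 + -(k 0 * deriv c₂ 0) * q.2 + -(k 0 ^ 2 * deriv c₁ 0) / 2 * q.2 ^ 2 + ((k 0 ^ 3 - deriv (deriv k) 0) * deriv c₂ 0) / 6 * q.2 ^ 3)))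
      =O[nhds ((0:ℝ), (0:ℝ))] fun q => ‖q‖ ^ 4 :=
    (compFst _ 4 hR1xO).add (compSnd _ 4 hR1xO)
  have hb1x : ∀ s, |deriv c₁ s| ≤ 1 := fun s =>
    abs_le.mpr ⟨by nlinarith [hunit s, sq_nonneg (deriv c₂ s)],
      by nlinarith [hunit s, sq_nonneg (deriv c₂ s)]⟩
  have hb1y : ∀ s, |deriv c₂ s| ≤ 1 := fun s =>
    abs_le.mpr ⟨by nlinarith [hunit s, sq_nonneg (deriv c₁ s)],
      by nlinarith [hunit s, sq_nonneg (deriv c₁ s)]⟩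
  have hVy : (fun q : ℝ × ℝ => -(deriv c₂ q.1) - deriv c₂ q.2)
      =O[nhds ((0:ℝ), (0:ℝ))] fun _ => (1:ℝ) := by
    refine isBigO_of_le' (c := 2) _ fun q => ?_
    rw [Real.norm_eq_abs, norm_one, mul_one]
    calc |(-(deriv c₂ q.1)) - deriv c₂ q.2| ≤ |(-(deriv c₂ q.1))| + |deriv c₂ q.2| := abs_sub _ _
      _ ≤ 1 + 1 := by rw [abs_neg]; exact add_le_add (hb1y q.1) (hb1y q.2)
      _ = 2 := by norm_num
  have hVx : (fun q : ℝ × ℝ => deriv c₁ q.1 + deriv c₁ q.2)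
      =O[nhds ((0:ℝ), (0:ℝ))] fun _ => (1:ℝ) := by
    refine isBigO_of_le' (c := 2) _ fun q => ?_
    rw [Real.norm_eq_abs, norm_one, mul_one]
    calc |deriv c₁ q.1 + deriv c₁ q.2| ≤ |deriv c₁ q.1| + |deriv c₁ q.2| := abs_add_le _ _
      _ ≤ 1 + 1 := add_le_add (hb1x q.1) (hb1x q.2)
      _ = 2 := by norm_num
  have hR0x1 := compFst _ 5 hR0xO
  have hR0x2 := compSnd _ 5 hR0xO
  have hR0y1 := compFst _ 5 hR0yO
  have hR0y2 := compSnd _ 5 hR0yO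
  have hJ : (fun q : ℝ × ℝ => (q.1 ^ 2 - q.2 ^ 2) ^ 3)
      =O[nhds ((0:ℝ), (0:ℝ))] fun q => ‖q‖ ^ 5 := by
    have h := ((mono5 6 0 (by norm_num)).sub ((mono5 4 2 (by norm_num)).const_mul_left 3)).add
      (((mono5 2 4 (by norm_num)).const_mul_left 3).sub (mono5 0 6 (by norm_num)))
    exact h.congr_left fun q => by ring
  have hT0 : (fun q : ℝ × ℝ => (k 0 ^ 2 * (deriv (deriv k) 0 - k 0 ^ 3) * (deriv c₁ 0 ^ 2 + deriv c₂ 0 ^ 2) / 144) * ((q.1 ^ 2 - q.2 ^ 2) ^ 3))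
      =O[nhds ((0:ℝ), (0:ℝ))] fun q => ‖q‖ ^ 5 :=
    hJ.const_mul_left (k 0 ^ 2 * (deriv (deriv k) 0 - k 0 ^ 3) * (deriv c₁ 0 ^ 2 + deriv c₂ 0 ^ 2) / 144)
  have hT1 : (fun q : ℝ × ℝ => deriv c₁ 0 * ((q.1 - q.2) * (-(deriv c₂ q.1 - (deriv c₂ 0 + k 0 * deriv c₁ 0 * q.1 + -(k 0 ^ 2 * deriv c₂ 0) / 2 * q.1 ^ 2 + ((deriv (deriv k) 0 - k 0 ^ 3) * deriv c₁ 0) / 6 * q.1 ^ 3)) - (deriv c₂ q.2 - (deriv c₂ 0 + k 0 * deriv c₁ 0 * q.2 + -(k 0 ^ 2 * deriv c₂ 0) / 2 * q.2 ^ 2 + ((deriv (deriv k) 0 - k 0 ^ 3) * deriv c₁ 0) / 6 * q.2 ^ 3)))))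
      =O[nhds ((0:ℝ), (0:ℝ))] fun q => ‖q‖ ^ 5 :=
    (((monDiff 1 le_rfl).mul hW).const_mul_left (deriv c₁ 0)).congr (fun q => by beta_reduce; ring) (fun q => by ring)
  have hT2 : (fun q : ℝ × ℝ => (-(k 0 * deriv c₂ 0) / 2) * ((q.1 ^ 2 - q.2 ^ 2) * (-(deriv c₂ q.1 - (deriv c₂ 0 + k 0 * deriv c₁ 0 * q.1 + -(k 0 ^ 2 * deriv c₂ 0) / 2 * q.1 ^ 2 + ((deriv (deriv k) 0 - k 0 ^ 3) * deriv c₁ 0) / 6 * q.1 ^ 3)) - (deriv c₂ q.2 - (deriv c₂ 0 + k 0 * deriv c₁ 0 * q.2 + -(k 0 ^ 2 * deriv c₂ 0) / 2 * q.2 ^ 2 + ((deriv (deriv k) 0 - k 0 ^ 3) * deriv c₁ 0) / 6 * q.2 ^ 3)))))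
      =O[nhds ((0:ℝ), (0:ℝ))] fun q => ‖q‖ ^ 5 :=
    (((monDiff 2 one_le_two).mul hW).const_mul_left (-(k 0 * deriv c₂ 0) / 2)).congr (fun q => by beta_reduce; ring) (fun q => by ring)
  have hT3 : (fun q : ℝ × ℝ => (-(k 0 ^ 2 * deriv c₁ 0) / 6) * ((q.1 ^ 3 - q.2 ^ 3) * (-(deriv c₂ q.1 - (deriv c₂ 0 + k 0 * deriv c₁ 0 * q.1 + -(k 0 ^ 2 * deriv c₂ 0) / 2 * q.1 ^ 2 + ((deriv (deriv k) 0 - k 0 ^ 3) * deriv c₁ 0) / 6 * q.1 ^ 3)) - (deriv c₂ q.2 - (deriv c₂ 0 + k 0 * deriv c₁ 0 * q.2 + -(k 0 ^ 2 * deriv c₂ 0) / 2 * q.2 ^ 2 + ((deriv (deriv k) 0 - k 0 ^ 3) * deriv c₁ 0) / 6 * q.2 ^ 3)))))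
      =O[nhds ((0:ℝ), (0:ℝ))] fun q => ‖q‖ ^ 5 :=
    (((monDiff 3 (by norm_num)).mul hW).const_mul_left (-(k 0 ^ 2 * deriv c₁ 0) / 6)).congr (fun q => by beta_reduce; ring) (fun q => by ring)
  have hT4 : (fun q : ℝ × ℝ => (((k 0 ^ 3 - deriv (deriv k) 0) * deriv c₂ 0) / 24) * ((q.1 ^ 4 - q.2 ^ 4) * (-(deriv c₂ q.1 - (deriv c₂ 0 + k 0 * deriv c₁ 0 * q.1 + -(k 0 ^ 2 * deriv c₂ 0) / 2 * q.1 ^ 2 + ((deriv (deriv k) 0 - k 0 ^ 3) * deriv c₁ 0) / 6 * q.1 ^ 3)) - (deriv c₂ q.2 - (deriv c₂ 0 + k 0 * deriv c₁ 0 * q.2 + -(k 0 ^ 2 * deriv c₂ 0) / 2 * q.2 ^ 2 + ((deriv (deriv k) 0 - k 0 ^ 3) * deriv c₁ 0) / 6 * q.2 ^ 3)))))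
      =O[nhds ((0:ℝ), (0:ℝ))] fun q => ‖q‖ ^ 5 :=
    (((monDiff 4 (by norm_num)).mul hW).const_mul_left (((k 0 ^ 3 - deriv (deriv k) 0) * deriv c₂ 0) / 24)).congr (fun q => by beta_reduce; ring) (fun q => by ring)
  have hT5 : (fun q : ℝ × ℝ => deriv c₂ 0 * ((q.1 - q.2) * ((deriv c₁ q.1 - (deriv c₁ 0 + -(k 0 * deriv c₂ 0) * q.1 + -(k 0 ^ 2 * deriv c₁ 0) / 2 * q.1 ^ 2 + ((k 0 ^ 3 - deriv (deriv k) 0) * deriv c₂ 0) / 6 * q.1 ^ 3)) + (deriv c₁ q.2 - (deriv c₁ 0 + -(k 0 * deriv c₂ 0) * q.2 + -(k 0 ^ 2 * deriv c₁ 0) / 2 * q.2 ^ 2 + ((k 0 ^ 3 - deriv (deriv k) 0) * deriv c₂ 0) / 6 * q.2 ^ 3)))))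
      =O[nhds ((0:ℝ), (0:ℝ))] fun q => ‖q‖ ^ 5 :=
    (((monDiff 1 le_rfl).mul hU).const_mul_left (deriv c₂ 0)).congr (fun q => by beta_reduce; ring) (fun q => by ring)
  have hT6 : (fun q : ℝ × ℝ => (k 0 * deriv c₁ 0 / 2) * ((q.1 ^ 2 - q.2 ^ 2) * ((deriv c₁ q.1 - (deriv c₁ 0 + -(k 0 * deriv c₂ 0) * q.1 + -(k 0 ^ 2 * deriv c₁ 0) / 2 * q.1 ^ 2 + ((k 0 ^ 3 - deriv (deriv k) 0) * deriv c₂ 0) / 6 * q.1 ^ 3)) + (deriv c₁ q.2 - (deriv c₁ 0 + -(k 0 * deriv c₂ 0) * q.2 + -(k 0 ^ 2 * deriv c₁ 0) / 2 * q.2 ^ 2 + ((k 0 ^ 3 - deriv (deriv k) 0) * deriv c₂ 0) / 6 * q.2 ^ 3)))))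
      =O[nhds ((0:ℝ), (0:ℝ))] fun q => ‖q‖ ^ 5 :=
    (((monDiff 2 one_le_two).mul hU).const_mul_left (k 0 * deriv c₁ 0 / 2)).congr (fun q => by beta_reduce; ring) (fun q => by ring)
  have hT7 : (fun q : ℝ × ℝ => (-(k 0 ^ 2 * deriv c₂ 0) / 6) * ((q.1 ^ 3 - q.2 ^ 3) * ((deriv c₁ q.1 - (deriv c₁ 0 + -(k 0 * deriv c₂ 0) * q.1 + -(k 0 ^ 2 * deriv c₁ 0) / 2 * q.1 ^ 2 + ((k 0 ^ 3 - deriv (deriv k) 0) * deriv c₂ 0) / 6 * q.1 ^ 3)) + (deriv c₁ q.2 - (deriv c₁ 0 + -(k 0 * deriv c₂ 0) * q.2 + -(k 0 ^ 2 * deriv c₁ 0) / 2 * q.2 ^ 2 + ((k 0 ^ 3 - deriv (deriv k) 0) * deriv c₂ 0) / 6 * q.2 ^ 3)))))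
      =O[nhds ((0:ℝ), (0:ℝ))] fun q => ‖q‖ ^ 5 :=
    (((monDiff 3 (by norm_num)).mul hU).const_mul_left (-(k 0 ^ 2 * deriv c₂ 0) / 6)).congr (fun q => by beta_reduce; ring) (fun q => by ring)
  have hT8 : (fun q : ℝ × ℝ => (((deriv (deriv k) 0 - k 0 ^ 3) * deriv c₁ 0) / 24) * ((q.1 ^ 4 - q.2 ^ 4) * ((deriv c₁ q.1 - (deriv c₁ 0 + -(k 0 * deriv c₂ 0) * q.1 + -(k 0 ^ 2 * deriv c₁ 0) / 2 * q.1 ^ 2 + ((k 0 ^ 3 - deriv (deriv k) 0) * deriv c₂ 0) / 6 * q.1 ^ 3)) + (deriv c₁ q.2 - (deriv c₁ 0 + -(k 0 * deriv c₂ 0) * q.2 + -(k 0 ^ 2 * deriv c₁ 0) / 2 * q.2 ^ 2 + ((k 0 ^ 3 - deriv (deriv k) 0) * deriv c₂ 0) / 6 * q.2 ^ 3)))))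
      =O[nhds ((0:ℝ), (0:ℝ))] fun q => ‖q‖ ^ 5 :=
    (((monDiff 4 (by norm_num)).mul hU).const_mul_left (((deriv (deriv k) 0 - k 0 ^ 3) * deriv c₁ 0) / 24)).congr (fun q => by beta_reduce; ring) (fun q => by ring)
  have hT9 : (fun q : ℝ × ℝ => ((c₁ q.1 - (deriv c₁ 0 * q.1 + -(k 0 * deriv c₂ 0) / 2 * q.1 ^ 2 + -(k 0 ^ 2 * deriv c₁ 0) / 6 * q.1 ^ 3 + ((k 0 ^ 3 - deriv (deriv k) 0) * deriv c₂ 0) / 24 * q.1 ^ 4)) - (c₁ q.2 - (deriv c₁ 0 * q.2 + -(k 0 * deriv c₂ 0) / 2 * q.2 ^ 2 + -(k 0 ^ 2 * deriv c₁ 0) / 6 * q.2 ^ 3 + ((k 0 ^ 3 - deriv (deriv k) 0) * deriv c₂ 0) / 24 * q.2 ^ 4))) * (-(deriv c₂ q.1) - deriv c₂ q.2))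
      =O[nhds ((0:ℝ), (0:ℝ))] fun q => ‖q‖ ^ 5 :=
    ((hR0x1.sub hR0x2).mul hVy).congr (fun q => by beta_reduce; ring) (fun q => by ring)
  have hT10 : (fun q : ℝ × ℝ => ((c₂ q.1 - (deriv c₂ 0 * q.1 + k 0 * deriv c₁ 0 / 2 * q.1 ^ 2 + -(k 0 ^ 2 * deriv c₂ 0) / 6 * q.1 ^ 3 + ((deriv (deriv k) 0 - k 0 ^ 3) * deriv c₁ 0) / 24 * q.1 ^ 4)) - (c₂ q.2 - (deriv c₂ 0 * q.2 + k 0 * deriv c₁ 0 / 2 * q.2 ^ 2 + -(k 0 ^ 2 * deriv c₂ 0) / 6 * q.2 ^ 3 + ((deriv (deriv k) 0 - k 0 ^ 3) * deriv c₁ 0) / 24 * q.2 ^ 4))) * (deriv c₁ q.1 + deriv c₁ q.2))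
      =O[nhds ((0:ℝ), (0:ℝ))] fun q => ‖q‖ ^ 5 :=
    ((hR0y1.sub hR0y2).mul hVx).congr (fun q => by beta_reduce; ring) (fun q => by ring)
  have hE : (fun q : ℝ × ℝ =>
      (k 0 ^ 2 * (deriv (deriv k) 0 - k 0 ^ 3) * (deriv c₁ 0 ^ 2 + deriv c₂ 0 ^ 2) / 144) * ((q.1 ^ 2 - q.2 ^ 2) ^ 3)
      + deriv c₁ 0 * ((q.1 - q.2) * (-(deriv c₂ q.1 - (deriv c₂ 0 + k 0 * deriv c₁ 0 * q.1 + -(k 0 ^ 2 * deriv c₂ 0) / 2 * q.1 ^ 2 + ((deriv (deriv k) 0 - k 0 ^ 3) * deriv c₁ 0) / 6 * q.1 ^ 3)) - (deriv c₂ q.2 - (deriv c₂ 0 + k 0 * deriv c₁ 0 * q.2 + -(k 0 ^ 2 * deriv c₂ 0) / 2 * q.2 ^ 2 + ((deriv (deriv k) 0 - k 0 ^ 3) * deriv c₁ 0) / 6 * q.2 ^ 3))))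
      + (-(k 0 * deriv c₂ 0) / 2) * ((q.1 ^ 2 - q.2 ^ 2) * (-(deriv c₂ q.1 - (deriv c₂ 0 + k 0 * deriv c₁ 0 * q.1 + -(k 0 ^ 2 * deriv c₂ 0) / 2 * q.1 ^ 2 + ((deriv (deriv k) 0 - k 0 ^ 3) * deriv c₁ 0) / 6 * q.1 ^ 3)) - (deriv c₂ q.2 - (deriv c₂ 0 + k 0 * deriv c₁ 0 * q.2 + -(k 0 ^ 2 * deriv c₂ 0) / 2 * q.2 ^ 2 + ((deriv (deriv k) 0 - k 0 ^ 3) * deriv c₁ 0) / 6 * q.2 ^ 3))))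
      + (-(k 0 ^ 2 * deriv c₁ 0) / 6) * ((q.1 ^ 3 - q.2 ^ 3) * (-(deriv c₂ q.1 - (deriv c₂ 0 + k 0 * deriv c₁ 0 * q.1 + -(k 0 ^ 2 * deriv c₂ 0) / 2 * q.1 ^ 2 + ((deriv (deriv k) 0 - k 0 ^ 3) * deriv c₁ 0) / 6 * q.1 ^ 3)) - (deriv c₂ q.2 - (deriv c₂ 0 + k 0 * deriv c₁ 0 * q.2 + -(k 0 ^ 2 * deriv c₂ 0) / 2 * q.2 ^ 2 + ((deriv (deriv k) 0 - k 0 ^ 3) * deriv c₁ 0) / 6 * q.2 ^ 3))))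
      + (((k 0 ^ 3 - deriv (deriv k) 0) * deriv c₂ 0) / 24) * ((q.1 ^ 4 - q.2 ^ 4) * (-(deriv c₂ q.1 - (deriv c₂ 0 + k 0 * deriv c₁ 0 * q.1 + -(k 0 ^ 2 * deriv c₂ 0) / 2 * q.1 ^ 2 + ((deriv (deriv k) 0 - k 0 ^ 3) * deriv c₁ 0) / 6 * q.1 ^ 3)) - (deriv c₂ q.2 - (deriv c₂ 0 + k 0 * deriv c₁ 0 * q.2 + -(k 0 ^ 2 * deriv c₂ 0) / 2 * q.2 ^ 2 + ((deriv (deriv k) 0 - k 0 ^ 3) * deriv c₁ 0) / 6 * q.2 ^ 3))))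
      + deriv c₂ 0 * ((q.1 - q.2) * ((deriv c₁ q.1 - (deriv c₁ 0 + -(k 0 * deriv c₂ 0) * q.1 + -(k 0 ^ 2 * deriv c₁ 0) / 2 * q.1 ^ 2 + ((k 0 ^ 3 - deriv (deriv k) 0) * deriv c₂ 0) / 6 * q.1 ^ 3)) + (deriv c₁ q.2 - (deriv c₁ 0 + -(k 0 * deriv c₂ 0) * q.2 + -(k 0 ^ 2 * deriv c₁ 0) / 2 * q.2 ^ 2 + ((k 0 ^ 3 - deriv (deriv k) 0) * deriv c₂ 0) / 6 * q.2 ^ 3))))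
      + (k 0 * deriv c₁ 0 / 2) * ((q.1 ^ 2 - q.2 ^ 2) * ((deriv c₁ q.1 - (deriv c₁ 0 + -(k 0 * deriv c₂ 0) * q.1 + -(k 0 ^ 2 * deriv c₁ 0) / 2 * q.1 ^ 2 + ((k 0 ^ 3 - deriv (deriv k) 0) * deriv c₂ 0) / 6 * q.1 ^ 3)) + (deriv c₁ q.2 - (deriv c₁ 0 + -(k 0 * deriv c₂ 0) * q.2 + -(k 0 ^ 2 * deriv c₁ 0) / 2 * q.2 ^ 2 + ((k 0 ^ 3 - deriv (deriv k) 0) * deriv c₂ 0) / 6 * q.2 ^ 3))))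
      + (-(k 0 ^ 2 * deriv c₂ 0) / 6) * ((q.1 ^ 3 - q.2 ^ 3) * ((deriv c₁ q.1 - (deriv c₁ 0 + -(k 0 * deriv c₂ 0) * q.1 + -(k 0 ^ 2 * deriv c₁ 0) / 2 * q.1 ^ 2 + ((k 0 ^ 3 - deriv (deriv k) 0) * deriv c₂ 0) / 6 * q.1 ^ 3)) + (deriv c₁ q.2 - (deriv c₁ 0 + -(k 0 * deriv c₂ 0) * q.2 + -(k 0 ^ 2 * deriv c₁ 0) / 2 * q.2 ^ 2 + ((k 0 ^ 3 - deriv (deriv k) 0) * deriv c₂ 0) / 6 * q.2 ^ 3))))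
      + (((deriv (deriv k) 0 - k 0 ^ 3) * deriv c₁ 0) / 24) * ((q.1 ^ 4 - q.2 ^ 4) * ((deriv c₁ q.1 - (deriv c₁ 0 + -(k 0 * deriv c₂ 0) * q.1 + -(k 0 ^ 2 * deriv c₁ 0) / 2 * q.1 ^ 2 + ((k 0 ^ 3 - deriv (deriv k) 0) * deriv c₂ 0) / 6 * q.1 ^ 3)) + (deriv c₁ q.2 - (deriv c₁ 0 + -(k 0 * deriv c₂ 0) * q.2 + -(k 0 ^ 2 * deriv c₁ 0) / 2 * q.2 ^ 2 + ((k 0 ^ 3 - deriv (deriv k) 0) * deriv c₂ 0) / 6 * q.2 ^ 3))))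
      + ((c₁ q.1 - (deriv c₁ 0 * q.1 + -(k 0 * deriv c₂ 0) / 2 * q.1 ^ 2 + -(k 0 ^ 2 * deriv c₁ 0) / 6 * q.1 ^ 3 + ((k 0 ^ 3 - deriv (deriv k) 0) * deriv c₂ 0) / 24 * q.1 ^ 4)) - (c₁ q.2 - (deriv c₁ 0 * q.2 + -(k 0 * deriv c₂ 0) / 2 * q.2 ^ 2 + -(k 0 ^ 2 * deriv c₁ 0) / 6 * q.2 ^ 3 + ((k 0 ^ 3 - deriv (deriv k) 0) * deriv c₂ 0) / 24 * q.2 ^ 4))) * (-(deriv c₂ q.1) - deriv c₂ q.2)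
      + ((c₂ q.1 - (deriv c₂ 0 * q.1 + k 0 * deriv c₁ 0 / 2 * q.1 ^ 2 + -(k 0 ^ 2 * deriv c₂ 0) / 6 * q.1 ^ 3 + ((deriv (deriv k) 0 - k 0 ^ 3) * deriv c₁ 0) / 24 * q.1 ^ 4)) - (c₂ q.2 - (deriv c₂ 0 * q.2 + k 0 * deriv c₁ 0 / 2 * q.2 ^ 2 + -(k 0 ^ 2 * deriv c₂ 0) / 6 * q.2 ^ 3 + ((deriv (deriv k) 0 - k 0 ^ 3) * deriv c₁ 0) / 24 * q.2 ^ 4))) * (deriv c₁ q.1 + deriv c₁ q.2))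
      =O[nhds ((0:ℝ), (0:ℝ))] fun q => ‖q‖ ^ 5 := by
    exact ((((((((((hT0.add hT1).add hT2).add hT3).add hT4).add hT5).add hT6).add hT7).add hT8).add hT9).add hT10)
  have hid : ∀ q : ℝ × ℝ,
      f q.1 q.2 - (-(deriv (deriv k) 0 / 12) * (q.1 ^ 2 - q.2 ^ 2) * (q.1 - q.2) ^ 2)
      = (k 0 ^ 2 * (deriv (deriv k) 0 - k 0 ^ 3) * (deriv c₁ 0 ^ 2 + deriv c₂ 0 ^ 2) / 144) * ((q.1 ^ 2 - q.2 ^ 2) ^ 3)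
      + deriv c₁ 0 * ((q.1 - q.2) * (-(deriv c₂ q.1 - (deriv c₂ 0 + k 0 * deriv c₁ 0 * q.1 + -(k 0 ^ 2 * deriv c₂ 0) / 2 * q.1 ^ 2 + ((deriv (deriv k) 0 - k 0 ^ 3) * deriv c₁ 0) / 6 * q.1 ^ 3)) - (deriv c₂ q.2 - (deriv c₂ 0 + k 0 * deriv c₁ 0 * q.2 + -(k 0 ^ 2 * deriv c₂ 0) / 2 * q.2 ^ 2 + ((deriv (deriv k) 0 - k 0 ^ 3) * deriv c₁ 0) / 6 * q.2 ^ 3))))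
      + (-(k 0 * deriv c₂ 0) / 2) * ((q.1 ^ 2 - q.2 ^ 2) * (-(deriv c₂ q.1 - (deriv c₂ 0 + k 0 * deriv c₁ 0 * q.1 + -(k 0 ^ 2 * deriv c₂ 0) / 2 * q.1 ^ 2 + ((deriv (deriv k) 0 - k 0 ^ 3) * deriv c₁ 0) / 6 * q.1 ^ 3)) - (deriv c₂ q.2 - (deriv c₂ 0 + k 0 * deriv c₁ 0 * q.2 + -(k 0 ^ 2 * deriv c₂ 0) / 2 * q.2 ^ 2 + ((deriv (deriv k) 0 - k 0 ^ 3) * deriv c₁ 0) / 6 * q.2 ^ 3))))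
      + (-(k 0 ^ 2 * deriv c₁ 0) / 6) * ((q.1 ^ 3 - q.2 ^ 3) * (-(deriv c₂ q.1 - (deriv c₂ 0 + k 0 * deriv c₁ 0 * q.1 + -(k 0 ^ 2 * deriv c₂ 0) / 2 * q.1 ^ 2 + ((deriv (deriv k) 0 - k 0 ^ 3) * deriv c₁ 0) / 6 * q.1 ^ 3)) - (deriv c₂ q.2 - (deriv c₂ 0 + k 0 * deriv c₁ 0 * q.2 + -(k 0 ^ 2 * deriv c₂ 0) / 2 * q.2 ^ 2 + ((deriv (deriv k) 0 - k 0 ^ 3) * deriv c₁ 0) / 6 * q.2 ^ 3))))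
      + (((k 0 ^ 3 - deriv (deriv k) 0) * deriv c₂ 0) / 24) * ((q.1 ^ 4 - q.2 ^ 4) * (-(deriv c₂ q.1 - (deriv c₂ 0 + k 0 * deriv c₁ 0 * q.1 + -(k 0 ^ 2 * deriv c₂ 0) / 2 * q.1 ^ 2 + ((deriv (deriv k) 0 - k 0 ^ 3) * deriv c₁ 0) / 6 * q.1 ^ 3)) - (deriv c₂ q.2 - (deriv c₂ 0 + k 0 * deriv c₁ 0 * q.2 + -(k 0 ^ 2 * deriv c₂ 0) / 2 * q.2 ^ 2 + ((deriv (deriv k) 0 - k 0 ^ 3) * deriv c₁ 0) / 6 * q.2 ^ 3))))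
      + deriv c₂ 0 * ((q.1 - q.2) * ((deriv c₁ q.1 - (deriv c₁ 0 + -(k 0 * deriv c₂ 0) * q.1 + -(k 0 ^ 2 * deriv c₁ 0) / 2 * q.1 ^ 2 + ((k 0 ^ 3 - deriv (deriv k) 0) * deriv c₂ 0) / 6 * q.1 ^ 3)) + (deriv c₁ q.2 - (deriv c₁ 0 + -(k 0 * deriv c₂ 0) * q.2 + -(k 0 ^ 2 * deriv c₁ 0) / 2 * q.2 ^ 2 + ((k 0 ^ 3 - deriv (deriv k) 0) * deriv c₂ 0) / 6 * q.2 ^ 3))))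
      + (k 0 * deriv c₁ 0 / 2) * ((q.1 ^ 2 - q.2 ^ 2) * ((deriv c₁ q.1 - (deriv c₁ 0 + -(k 0 * deriv c₂ 0) * q.1 + -(k 0 ^ 2 * deriv c₁ 0) / 2 * q.1 ^ 2 + ((k 0 ^ 3 - deriv (deriv k) 0) * deriv c₂ 0) / 6 * q.1 ^ 3)) + (deriv c₁ q.2 - (deriv c₁ 0 + -(k 0 * deriv c₂ 0) * q.2 + -(k 0 ^ 2 * deriv c₁ 0) / 2 * q.2 ^ 2 + ((k 0 ^ 3 - deriv (deriv k) 0) * deriv c₂ 0) / 6 * q.2 ^ 3))))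
      + (-(k 0 ^ 2 * deriv c₂ 0) / 6) * ((q.1 ^ 3 - q.2 ^ 3) * ((deriv c₁ q.1 - (deriv c₁ 0 + -(k 0 * deriv c₂ 0) * q.1 + -(k 0 ^ 2 * deriv c₁ 0) / 2 * q.1 ^ 2 + ((k 0 ^ 3 - deriv (deriv k) 0) * deriv c₂ 0) / 6 * q.1 ^ 3)) + (deriv c₁ q.2 - (deriv c₁ 0 + -(k 0 * deriv c₂ 0) * q.2 + -(k 0 ^ 2 * deriv c₁ 0) / 2 * q.2 ^ 2 + ((k 0 ^ 3 - deriv (deriv k) 0) * deriv c₂ 0) / 6 * q.2 ^ 3))))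
      + (((deriv (deriv k) 0 - k 0 ^ 3) * deriv c₁ 0) / 24) * ((q.1 ^ 4 - q.2 ^ 4) * ((deriv c₁ q.1 - (deriv c₁ 0 + -(k 0 * deriv c₂ 0) * q.1 + -(k 0 ^ 2 * deriv c₁ 0) / 2 * q.1 ^ 2 + ((k 0 ^ 3 - deriv (deriv k) 0) * deriv c₂ 0) / 6 * q.1 ^ 3)) + (deriv c₁ q.2 - (deriv c₁ 0 + -(k 0 * deriv c₂ 0) * q.2 + -(k 0 ^ 2 * deriv c₁ 0) / 2 * q.2 ^ 2 + ((k 0 ^ 3 - deriv (deriv k) 0) * deriv c₂ 0) / 6 * q.2 ^ 3))))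
      + ((c₁ q.1 - (deriv c₁ 0 * q.1 + -(k 0 * deriv c₂ 0) / 2 * q.1 ^ 2 + -(k 0 ^ 2 * deriv c₁ 0) / 6 * q.1 ^ 3 + ((k 0 ^ 3 - deriv (deriv k) 0) * deriv c₂ 0) / 24 * q.1 ^ 4)) - (c₁ q.2 - (deriv c₁ 0 * q.2 + -(k 0 * deriv c₂ 0) / 2 * q.2 ^ 2 + -(k 0 ^ 2 * deriv c₁ 0) / 6 * q.2 ^ 3 + ((k 0 ^ 3 - deriv (deriv k) 0) * deriv c₂ 0) / 24 * q.2 ^ 4))) * (-(deriv c₂ q.1) - deriv c₂ q.2)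
      + ((c₂ q.1 - (deriv c₂ 0 * q.1 + k 0 * deriv c₁ 0 / 2 * q.1 ^ 2 + -(k 0 ^ 2 * deriv c₂ 0) / 6 * q.1 ^ 3 + ((deriv (deriv k) 0 - k 0 ^ 3) * deriv c₁ 0) / 24 * q.1 ^ 4)) - (c₂ q.2 - (deriv c₂ 0 * q.2 + k 0 * deriv c₁ 0 / 2 * q.2 ^ 2 + -(k 0 ^ 2 * deriv c₂ 0) / 6 * q.2 ^ 3 + ((deriv (deriv k) 0 - k 0 ^ 3) * deriv c₁ 0) / 24 * q.2 ^ 4))) * (deriv c₁ q.1 + deriv c₁ q.2) := by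
    intro q
    rw [hf]
    linear_combination
      (-(deriv (deriv k) 0 / 12) * (q.1 ^ 2 - q.2 ^ 2) * (q.1 - q.2) ^ 2) * hunit 0
  exact hE.congr_left fun q => (hid q).symm
end
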